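/- arXiv:1904.13135 — 10 statements merged into one kernel-verified Lean document; each statement's English description precedes it below -/
import Mathlib

section
/- Let ρ be a congruence on an inverse semigroup S, and define ρ_min by: a ρ_min b if and only if there exists an idempotent e of S with ae = be, a⁻¹a ρ e, and b⁻¹b ρ e. Then a ρ_min b if and only if there exists c ∈ S with c ≤ a, c ≤ b (in the natural partial order), a ρ c, and c ρ b. -/
/-- An inverse semigroup: a semigroup with an inverse operation such that
`a * a⁻¹ * a = a`, `a⁻¹ * a * a⁻¹ = a⁻¹`, and idempotents commute. -/
class InverseSemigroup (S : Type*) extends Semigroup S, Inv S where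
  mul_inv_mul : ∀ a : S, a * a⁻¹ * a = a
  inv_mul_inv : ∀ a : S, a⁻¹ * a * a⁻¹ = a⁻¹
  idem_comm : ∀ e f : S, e * e = e → f * f = f → e * f = f * e

/-- The natural partial order on an inverse semigroup: `a ≤ b` iff `a = e * b`
for some idempotent `e`. -/
def natLe {S : Type*} [InverseSemigroup S] (a b : S) : Prop :=
  ∃ e : S, e * e = e ∧ a = e * b

/-- The relation `ρ_min` associated to a congruence `ρ`:
`a ρ_min b` iff there is an idempotent `e` with `a*e = b*e`, `a⁻¹a ρ e` and `b⁻¹b ρ e`. -/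
def rhoMin {S : Type*} [InverseSemigroup S] (ρ : Con S) (a b : S) : Prop :=
  ∃ e : S, e * e = e ∧ a * e = b * e ∧ ρ (a⁻¹ * a) e ∧ ρ (b⁻¹ * b) e

/-
In `a ρ_min b` with witness `e`, the element `c = a e = b e` lies below `a` and `b`, and
`a = a (a⁻¹a) ρ a e = c`, likewise for `b`. Conversely, if `c ≤ a`, `c ≤ b`, then
`a (c⁻¹c) = c = b (c⁻¹c)` and `a⁻¹c = c⁻¹c`, so `a ρ c` gives `a⁻¹a ρ a⁻¹c = c⁻¹c`; thus
`e = c⁻¹c` witnesses `a ρ_min b`. The only structural input is uniqueness of inverses,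
which computes `(f a)⁻¹ = a⁻¹ f` for idempotent `f`.
-/

theorem isIdempotentElem_mul_of_mul_mul_eq_self {M : Type*} [Semigroup M] {x y : M}
    (h : x * y * x = x) : IsIdempotentElem (x * y) := by
  rw [IsIdempotentElem, ← mul_assoc, h]

namespace InverseSemigroup

variable {S : Type*} [InverseSemigroup S]

theorem isIdempotentElem_mul_inv (a : S) : IsIdempotentElem (a * a⁻¹) :=
  isIdempotentElem_mul_of_mul_mul_eq_self (mul_inv_mul a)

theorem isIdempotentElem_inv_mul (a : S) : IsIdempotentElem (a⁻¹ * a) :=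
  isIdempotentElem_mul_of_mul_mul_eq_self (inv_mul_inv a)

theorem commute_of_isIdempotentElem {e f : S} (he : IsIdempotentElem e)
    (hf : IsIdempotentElem f) : Commute e f :=
  idem_comm e f he hf

theorem eq_inv_of_mul_mul {a x : S} (h₁ : a * x * a = a) (h₂ : x * a * x = x) : x = a⁻¹ := by
  have hax := isIdempotentElem_mul_of_mul_mul_eq_self h₁
  have hxa := isIdempotentElem_mul_of_mul_mul_eq_self h₂
  -- both `x` and `a⁻¹` equal `a⁻¹ a x`
  have hx : x = a⁻¹ * a * x :=
    calc x = x * (a * a⁻¹ * a) * x := by rw [mul_inv_mul, h₂]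
      _ = x * a * (a⁻¹ * a) * x := by simp only [mul_assoc]
      _ = a⁻¹ * a * (x * a) * x := by
        rw [(commute_of_isIdempotentElem hxa (isIdempotentElem_inv_mul a)).eq]
      _ = a⁻¹ * (a * x * a) * x := by simp only [mul_assoc]
      _ = a⁻¹ * a * x := by rw [h₁]
  have hinv : a⁻¹ = a⁻¹ * a * x :=
    calc a⁻¹ = a⁻¹ * (a * x * a) * a⁻¹ := by rw [h₁, inv_mul_inv]
      _ = a⁻¹ * ((a * x) * (a * a⁻¹)) := by simp only [mul_assoc]
      _ = a⁻¹ * ((a * a⁻¹) * (a * x)) := by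
        rw [(commute_of_isIdempotentElem hax (isIdempotentElem_mul_inv a)).eq]
      _ = a⁻¹ * a * a⁻¹ * a * x := by simp only [mul_assoc]
      _ = a⁻¹ * a * x := by rw [inv_mul_inv]
  rw [hx, ← hinv]

theorem inv_mul_of_isIdempotentElem {f : S} (hf : IsIdempotentElem f) (a : S) :
    (f * a)⁻¹ = a⁻¹ * f := by
  have hcomm : a * a⁻¹ * f = f * (a * a⁻¹) :=
    (commute_of_isIdempotentElem (isIdempotentElem_mul_inv a) hf).eq
  refine (eq_inv_of_mul_mul ?_ ?_).symm
  · calc f * a * (a⁻¹ * f) * (f * a) = f * (a * a⁻¹ * (f * f)) * a := by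
          simp only [mul_assoc]
      _ = f * (f * (a * a⁻¹)) * a := by rw [hf.eq, hcomm]
      _ = f * a := by rw [← mul_assoc, hf.eq, mul_assoc, mul_inv_mul]
  · calc a⁻¹ * f * (f * a) * (a⁻¹ * f) = a⁻¹ * f * f * (a * a⁻¹ * f) := by
          simp only [mul_assoc]
      _ = a⁻¹ * (f * f * f) * (a * a⁻¹) := by rw [hcomm]; simp only [mul_assoc]
      _ = a⁻¹ * (a * a⁻¹ * f) := by rw [hf.eq, hf.eq, hcomm, mul_assoc]
      _ = a⁻¹ * f := by rw [← mul_assoc, ← mul_assoc, inv_mul_inv]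

end InverseSemigroup

section NaturalOrder

open InverseSemigroup

variable {S : Type*} [InverseSemigroup S]

theorem mul_inv_mul_of_isIdempotentElem {e : S} (he : IsIdempotentElem e) (a : S) :
    a * e * a⁻¹ * a = a * e := by
  rw [mul_assoc (a * e), mul_assoc a,
    (commute_of_isIdempotentElem he (isIdempotentElem_inv_mul a)).eq,
    ← mul_assoc, ← mul_assoc a, mul_inv_mul]

theorem natLe_mul_of_isIdempotentElem {e : S} (he : IsIdempotentElem e) (a : S) :
    natLe (a * e) a := by
  refine ⟨a * e * a⁻¹, isIdempotentElem_mul_of_mul_mul_eq_self ?_,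
    (mul_inv_mul_of_isIdempotentElem he a).symm⟩
  rw [← mul_assoc, mul_inv_mul_of_isIdempotentElem he a, he.mul_mul_self]

theorem inv_mul_eq_of_natLe {c a : S} (h : natLe c a) : a⁻¹ * c = c⁻¹ * c := by
  obtain ⟨f, hf, rfl⟩ := h
  rw [inv_mul_of_isIdempotentElem hf]
  simp only [← mul_assoc, IsIdempotentElem.mul_mul_self hf]

theorem mul_inv_mul_eq_of_natLe {c a : S} (h : natLe c a) : a * (c⁻¹ * c) = c := by
  rw [← inv_mul_eq_of_natLe h]
  obtain ⟨f, hf, rfl⟩ := h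
  rw [← mul_assoc, ← mul_assoc,
    (commute_of_isIdempotentElem (isIdempotentElem_mul_inv a) hf).eq, mul_assoc, mul_inv_mul]

theorem con_mul_of_con_inv_mul (ρ : Con S) {a e : S} (h : ρ (a⁻¹ * a) e) : ρ a (a * e) := by
  simpa only [← mul_assoc, mul_inv_mul] using ρ.mul (ρ.refl a) h

theorem con_inv_mul_of_natLe (ρ : Con S) {c a : S} (hca : natLe c a) (h : ρ a c) :
    ρ (a⁻¹ * a) (c⁻¹ * c) :=
  inv_mul_eq_of_natLe hca ▸ ρ.mul (ρ.refl a⁻¹) h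

end NaturalOrder

/-- `a ρ_min b` iff there exists `c` with `c ≤ a`, `c ≤ b`,
`a ρ c` and `c ρ b`. -/
theorem stmt0 {S : Type*} [InverseSemigroup S] (ρ : Con S) (a b : S) :
    rhoMin ρ a b ↔ ∃ c : S, natLe c a ∧ natLe c b ∧ ρ a c ∧ ρ c b := by
  constructor
  · rintro ⟨e, he, hab, hρa, hρb⟩
    refine ⟨a * e, natLe_mul_of_isIdempotentElem he a, hab ▸ natLe_mul_of_isIdempotentElem he b,
      con_mul_of_con_inv_mul ρ hρa, hab ▸ ρ.symm (con_mul_of_con_inv_mul ρ hρb)⟩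
  · rintro ⟨c, hca, hcb, hρac, hρcb⟩
    refine ⟨c⁻¹ * c, InverseSemigroup.isIdempotentElem_inv_mul c, ?_,
      con_inv_mul_of_natLe ρ hca hρac, con_inv_mul_of_natLe ρ hcb (ρ.symm hρcb)⟩
    rw [mul_inv_mul_eq_of_natLe hca, mul_inv_mul_eq_of_natLe hcb]
end

section
/- Let ρ be a congruence on an E-unitary inverse semigroup S, and define ρ_min as above. Then the canonical map τ : S → S/ρ_min is idempotent pure: if s ∈ S and s ρ_min x for some idempotent x, then s is an idempotent. -/
/-!
If `s ρ_min x` with `x` idempotent, a witness `e` gives `s e = x e`, a product of idempotents and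
hence idempotent. Since `s e = (s e s⁻¹) s` with `s e s⁻¹` idempotent, `s e` lies below `s` in the
natural order, so `E`-unitarity forces `s` to be idempotent.
-/

namespace InverseSemigroup

variable {S : Type*} [InverseSemigroup S]

theorem inv_mul_self_idem (s : S) : s⁻¹ * s * (s⁻¹ * s) = s⁻¹ * s := by
  rw [← mul_assoc, inv_mul_inv]

theorem mul_idem_of_idem {e f : S} (he : e * e = e) (hf : f * f = f) :
    e * f * (e * f) = e * f :=
  calc e * f * (e * f) = e * (f * e) * f := by simp only [mul_assoc]
    _ = e * e * (f * f) := by rw [← idem_comm e f he hf]; simp only [mul_assoc]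
    _ = e * f := by rw [he, hf]

theorem mul_idem_mul_inv_mul {e : S} (he : e * e = e) (s : S) : s * e * s⁻¹ * s = s * e :=
  calc s * e * s⁻¹ * s = s * (e * (s⁻¹ * s)) := by simp only [mul_assoc]
    _ = s * s⁻¹ * s * e := by
      rw [← idem_comm _ e (inv_mul_self_idem s) he]; simp only [mul_assoc]
    _ = s * e := by rw [mul_inv_mul]

theorem conj_idem {e : S} (he : e * e = e) (s : S) :
    s * e * s⁻¹ * (s * e * s⁻¹) = s * e * s⁻¹ :=
  calc s * e * s⁻¹ * (s * e * s⁻¹) = s * e * s⁻¹ * s * (e * s⁻¹) := by simp only [mul_assoc]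
    _ = s * (e * e) * s⁻¹ := by rw [mul_idem_mul_inv_mul he]; simp only [mul_assoc]
    _ = s * e * s⁻¹ := by rw [he]

theorem natLe_mul_idem {e : S} (he : e * e = e) (s : S) : natLe (s * e) s :=
  ⟨s * e * s⁻¹, conj_idem he s, (mul_idem_mul_inv_mul he s).symm⟩

end InverseSemigroup

open InverseSemigroup in
/-- if `S` is `E`-unitary (idempotents below an element force it to be
idempotent), then the canonical map `τ : S → S/ρ_min` is idempotent pure: if
`s ρ_min x` with `x` idempotent, then `s` is idempotent. -/
theorem stmt2 {S : Type*} [InverseSemigroup S] (ρ : Con S)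
    (hEunitary : ∀ e s : S, e * e = e → natLe e s → s * s = s) :
    ∀ s x : S, x * x = x → rhoMin ρ s x → s * s = s := by
  rintro s x hx ⟨e, he, hse, -, -⟩
  have hse_idem : s * e * (s * e) = s * e := hse ▸ mul_idem_of_idem hx he
  exact hEunitary (s * e) s hse_idem (natLe_mul_idem he s)
end

section
/- Let G be a semiregular groupoid with vertex monoid V(G). Define two binary operations on G by α ∗ β = (α ◁ βd) ∘ (αr ▷ β) and α ⊛ β = (αd ▷ β) ∘ (α ◁ βr). Then each of ∗ and ⊛ is an everywhere-defined associative operation making G a monoid with identity 1_e, where e is the identity of V(G). -/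
/-- A semiregular groupoid: a groupoid (given algebraically by its set of arrows `G`
over a vertex monoid `V`, with totalised composition `comp` whose axioms are guarded by
the composability condition `r α = d β`) together with left and right actions of the
vertex monoid `V` on arrows, satisfying the axioms of Definition 2.1. -/
structure SemiregularGroupoid (V : Type*) [Monoid V] (G : Type*) where
  d : G → V
  r : G → V
  comp : G → G → G
  id : V → G
  inv : G → G
  d_id : ∀ v, d (id v) = v
  r_id : ∀ v, r (id v) = v
  d_comp : ∀ α β, r α = d β → d (comp α β) = d α
  r_comp : ∀ α β, r α = d β → r (comp α β) = r β
  comp_assoc : ∀ α β γ, r α = d β → r β = d γ →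
    comp (comp α β) γ = comp α (comp β γ)
  id_comp : ∀ α, comp (id (d α)) α = α
  comp_id : ∀ α, comp α (id (r α)) = α
  d_inv : ∀ α, d (inv α) = r α
  r_inv : ∀ α, r (inv α) = d α
  comp_inv : ∀ α, comp α (inv α) = id (d α)
  inv_comp : ∀ α, comp (inv α) α = id (r α)
  actL : V → G → G
  actR : G → V → G
  actL_mul : ∀ x y α, actL (x * y) α = actL x (actL y α)
  actR_mul : ∀ α x y, actR α (x * y) = actR (actR α x) y
  actL_actR : ∀ x α y, actR (actL x α) y = actL x (actR α y)
  one_actL : ∀ α, actL 1 α = α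
  actR_one : ∀ α, actR α 1 = α
  d_actL : ∀ x α, d (actL x α) = x * d α
  d_actR : ∀ α x, d (actR α x) = d α * x
  r_actL : ∀ x α, r (actL x α) = x * r α
  r_actR : ∀ α x, r (actR α x) = r α * x
  actL_comp : ∀ x α β, r α = d β → actL x (comp α β) = comp (actL x α) (actL x β)
  actR_comp : ∀ α β x, r α = d β → actR (comp α β) x = comp (actR α x) (actR β x)
  actL_id : ∀ x y, actL x (id y) = id (x * y)
  actR_id : ∀ x y, actR (id x) y = id (x * y)

/-- The operation `α ∗ β = (α ◁ βd) ∘ (αr ▷ β)`. -/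
def SemiregularGroupoid.star {V : Type*} [Monoid V] {G : Type*}
    (S : SemiregularGroupoid V G) (α β : G) : G :=
  S.comp (S.actR α (S.d β)) (S.actL (S.r α) β)

/-- The operation `α ⊛ β = (αd ▷ β) ∘ (α ◁ βr)`. -/
def SemiregularGroupoid.ostar {V : Type*} [Monoid V] {G : Type*}
    (S : SemiregularGroupoid V G) (α β : G) : G :=
  S.comp (S.actL (S.d α) β) (S.actR α (S.r β))


/-! Both sides of the associativity law for `∗` whisker the three arrows into the same
composable triple `(α ◁ βd·γd) ∘ ((αr ▷ β) ◁ γd) ∘ (αr·βr ▷ γ)`, because the actions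
distribute over composition and `d`, `r` are multiplicative on `∗`; groupoid associativity
then identifies them. The argument for `⊛` is the mirror image. -/

namespace SemiregularGroupoid

variable {V G : Type*} [Monoid V] (S : SemiregularGroupoid V G)

theorem r_actR_d_eq_d_actL_r (α β : G) :
    S.r (S.actR α (S.d β)) = S.d (S.actL (S.r α) β) := by
  rw [S.r_actR, S.d_actL]

theorem r_actL_d_eq_d_actR_r (α β : G) :
    S.r (S.actL (S.d α) β) = S.d (S.actR α (S.r β)) := by
  rw [S.r_actL, S.d_actR]

theorem d_star (α β : G) : S.d (S.star α β) = S.d α * S.d β := by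
  rw [star, S.d_comp _ _ (S.r_actR_d_eq_d_actL_r α β), S.d_actR]

theorem r_star (α β : G) : S.r (S.star α β) = S.r α * S.r β := by
  rw [star, S.r_comp _ _ (S.r_actR_d_eq_d_actL_r α β), S.r_actL]

theorem d_ostar (α β : G) : S.d (S.ostar α β) = S.d α * S.d β := by
  rw [ostar, S.d_comp _ _ (S.r_actL_d_eq_d_actR_r α β), S.d_actL]

theorem r_ostar (α β : G) : S.r (S.ostar α β) = S.r α * S.r β := by
  rw [ostar, S.r_comp _ _ (S.r_actL_d_eq_d_actR_r α β), S.r_actR]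

theorem star_assoc (α β γ : G) :
    S.star (S.star α β) γ = S.star α (S.star β γ) := by
  have h₁ : S.r (S.actR α (S.d β * S.d γ)) = S.d (S.actR (S.actL (S.r α) β) (S.d γ)) := by
    rw [S.r_actR, S.d_actR, S.d_actL, mul_assoc]
  have h₂ : S.r (S.actR (S.actL (S.r α) β) (S.d γ)) = S.d (S.actL (S.r α * S.r β) γ) := by
    rw [S.r_actR, S.r_actL, S.d_actL]
  rw [star.eq_1 S (S.star α β), star.eq_1 S α (S.star β γ), S.d_star, S.r_star,
    star.eq_1 S α β, star.eq_1 S β γ,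
    S.actR_comp _ _ _ (S.r_actR_d_eq_d_actL_r α β), ← S.actR_mul,
    S.actL_comp _ _ _ (S.r_actR_d_eq_d_actL_r β γ), ← S.actL_mul, ← S.actL_actR,
    S.comp_assoc _ _ _ h₁ h₂]

theorem one_star (α : G) : S.star (S.id 1) α = α := by
  rw [star, S.actR_id, S.r_id, S.one_actL, one_mul, S.id_comp]

theorem star_one (α : G) : S.star α (S.id 1) = α := by
  rw [star, S.d_id, S.actR_one, S.actL_id, mul_one, S.comp_id]

theorem ostar_assoc (α β γ : G) :
    S.ostar (S.ostar α β) γ = S.ostar α (S.ostar β γ) := by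
  have h₁ : S.r (S.actL (S.d α * S.d β) γ) = S.d (S.actL (S.d α) (S.actR β (S.r γ))) := by
    rw [S.r_actL, S.d_actL, S.d_actR, mul_assoc]
  have h₂ : S.r (S.actL (S.d α) (S.actR β (S.r γ))) = S.d (S.actR α (S.r β * S.r γ)) := by
    rw [S.r_actL, S.r_actR, S.d_actR]
  rw [ostar.eq_1 S (S.ostar α β), ostar.eq_1 S α (S.ostar β γ), S.d_ostar, S.r_ostar,
    ostar.eq_1 S α β, ostar.eq_1 S β γ,
    S.actL_comp _ _ _ (S.r_actL_d_eq_d_actR_r β γ), ← S.actL_mul,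
    S.actR_comp _ _ _ (S.r_actL_d_eq_d_actR_r α β), ← S.actR_mul, S.actL_actR,
    S.comp_assoc _ _ _ h₁ h₂]

theorem one_ostar (α : G) : S.ostar (S.id 1) α = α := by
  rw [ostar, S.d_id, S.one_actL, S.actR_id, one_mul, S.comp_id]

theorem ostar_one (α : G) : S.ostar α (S.id 1) = α := by
  rw [ostar, S.r_id, S.actR_one, S.actL_id, mul_one, S.id_comp]

end SemiregularGroupoid

/-- in a semiregular groupoid, the operations `∗` and `⊛` are everywhere
defined associative operations making `G` into a monoid with identity `1_e`, where `e`
is the identity of the vertex monoid `V`. -/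
theorem stmt6 {V : Type*} [Monoid V] {G : Type*} (S : SemiregularGroupoid V G) :
    (∀ α β γ : G, S.star (S.star α β) γ = S.star α (S.star β γ)) ∧
    (∀ α : G, S.star (S.id 1) α = α ∧ S.star α (S.id 1) = α) ∧
    (∀ α β γ : G, S.ostar (S.ostar α β) γ = S.ostar α (S.ostar β γ)) ∧
    (∀ α : G, S.ostar (S.id 1) α = α ∧ S.ostar α (S.id 1) = α) :=
  ⟨S.star_assoc, fun α => ⟨S.one_star α, S.star_one α⟩,
    S.ostar_assoc, fun α => ⟨S.one_ostar α, S.ostar_one α⟩⟩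
end

section
/- Let G be a pseudoregular groupoid and e an idempotent of the inverse monoid V(G). Define star_e^⋈(G) = {e ▷ α ◁ e : α ∈ G, αd = e} and π_e^⋈(G) = {α ∈ star_e^⋈(G) : αr = e}. Then the operation ∗ and the groupoid composition ∘ coincide on π_e^⋈(G), and π_e^⋈(G) is a group under this operation. -/
/-- An inverse monoid. -/
class InverseMonoid (M : Type*) extends Monoid M, Inv M where
  mul_inv_mul : ∀ a : M, a * a⁻¹ * a = a
  inv_mul_inv : ∀ a : M, a⁻¹ * a * a⁻¹ = a⁻¹
  idem_comm : ∀ e f : M, e * e = e → f * f = f → e * f = f * e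

/-- `star_e^⋈(G) = {e ▷ α ◁ e : αd = e}`. -/
def bowtieStar {V : Type*} [InverseMonoid V] {G : Type*}
    (S : SemiregularGroupoid V G) (e : V) : Set G :=
  {γ | ∃ α : G, S.d α = e ∧ γ = S.actL e (S.actR α e)}

/-- `π_e^⋈(G) = {α ∈ star_e^⋈(G) : αr = e}`. -/
def bowtiePi {V : Type*} [InverseMonoid V] {G : Type*}
    (S : SemiregularGroupoid V G) (e : V) : Set G :=
  {γ ∈ bowtieStar S e | S.r γ = e}

/-!
On `π_e^⋈(G)` both `αd` and `αr` equal `e`, and `e` acts trivially on each element from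
either side, so the whiskerings in `α ∗ β = (α ◁ βd) ∘ (αr ▷ β)` disappear and `∗` is
the composition of the vertex group at `e`. The map `α ↦ e ▷ α ◁ e` is an idempotent
functor of the underlying groupoid, so it sends `γ⁻¹` to an inverse of `γ` in `π_e^⋈(G)`.
-/

namespace SemiregularGroupoid

section Monoid

variable {V : Type*} [Monoid V] {G : Type*} (S : SemiregularGroupoid V G) (e : V)

/-- `e ▷ α ◁ e`. -/
def sandwich (α : G) : G :=
  S.actL e (S.actR α e)

variable {S e}

lemma d_sandwich (α : G) : S.d (S.sandwich e α) = e * S.d α * e := by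
  rw [sandwich, d_actL, d_actR, mul_assoc]

lemma r_sandwich (α : G) : S.r (S.sandwich e α) = e * S.r α * e := by
  rw [sandwich, r_actL, r_actR, mul_assoc]

lemma sandwich_id (v : V) : S.sandwich e (S.id v) = S.id (e * v * e) := by
  rw [sandwich, actR_id, actL_id, mul_assoc]

lemma sandwich_comp {α β : G} (h : S.r α = S.d β) :
    S.sandwich e (S.comp α β) = S.comp (S.sandwich e α) (S.sandwich e β) := by
  rw [sandwich, actR_comp _ _ _ _ h, actL_comp]
  · rfl
  · rw [r_actR, d_actR, h]

lemma sandwich_sandwich (he : e * e = e) (α : G) :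
    S.sandwich e (S.sandwich e α) = S.sandwich e α := by
  rw [sandwich, sandwich, actL_actR, ← actL_mul, he, ← actR_mul, he]

lemma actL_eq_self_of_sandwich_eq (he : e * e = e) {γ : G} (h : S.sandwich e γ = γ) :
    S.actL e γ = γ := by
  rw [← h, sandwich, ← actL_mul, he]

lemma actR_eq_self_of_sandwich_eq (he : e * e = e) {γ : G} (h : S.sandwich e γ = γ) :
    S.actR γ e = γ := by
  rw [← h, sandwich, actL_actR, ← actR_mul, he]

end Monoid

variable {V : Type*} [InverseMonoid V] {G : Type*} {S : SemiregularGroupoid V G} {e : V}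

lemma mem_bowtiePi_iff (he : e * e = e) {γ : G} :
    γ ∈ bowtiePi S e ↔ S.d γ = e ∧ S.r γ = e ∧ S.sandwich e γ = γ := by
  constructor
  · rintro ⟨⟨α, hα, rfl⟩, hr⟩
    exact ⟨by rw [← sandwich, d_sandwich, hα, he, he], hr, sandwich_sandwich he α⟩
  · rintro ⟨hd, hr, hfix⟩
    exact ⟨⟨γ, hd, hfix.symm⟩, hr⟩

lemma sandwich_mem_bowtiePi (he : e * e = e) {α : G} (hd : S.d α = e) (hr : S.r α = e) :
    S.sandwich e α ∈ bowtiePi S e :=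
  ⟨⟨α, hd, rfl⟩, by rw [r_sandwich, hr, he, he]⟩

lemma id_mem_bowtiePi (he : e * e = e) : S.id e ∈ bowtiePi S e := by
  simpa only [sandwich_id, he] using sandwich_mem_bowtiePi he (S.d_id e) (S.r_id e)

lemma comp_mem_bowtiePi (he : e * e = e) {γ δ : G} (hγ : γ ∈ bowtiePi S e)
    (hδ : δ ∈ bowtiePi S e) : S.comp γ δ ∈ bowtiePi S e := by
  obtain ⟨hγd, hγr, hγfix⟩ := (mem_bowtiePi_iff he).1 hγ
  obtain ⟨hδd, hδr, hδfix⟩ := (mem_bowtiePi_iff he).1 hδ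
  have hrd : S.r γ = S.d δ := hγr.trans hδd.symm
  refine (mem_bowtiePi_iff he).2 ⟨?_, ?_, ?_⟩
  · rw [S.d_comp _ _ hrd, hγd]
  · rw [S.r_comp _ _ hrd, hδr]
  · rw [sandwich_comp hrd, hγfix, hδfix]

lemma star_eq_comp_of_mem_bowtiePi (he : e * e = e) {γ δ : G} (hγ : γ ∈ bowtiePi S e)
    (hδ : δ ∈ bowtiePi S e) : S.star γ δ = S.comp γ δ := by
  obtain ⟨-, hγr, hγfix⟩ := (mem_bowtiePi_iff he).1 hγ
  obtain ⟨hδd, -, hδfix⟩ := (mem_bowtiePi_iff he).1 hδ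
  rw [star, hδd, hγr, actR_eq_self_of_sandwich_eq he hγfix, actL_eq_self_of_sandwich_eq he hδfix]

lemma comp_sandwich_inv_of_mem_bowtiePi (he : e * e = e) {γ : G} (hγ : γ ∈ bowtiePi S e) :
    S.comp γ (S.sandwich e (S.inv γ)) = S.id e := by
  obtain ⟨hd, -, hfix⟩ := (mem_bowtiePi_iff he).1 hγ
  calc S.comp γ (S.sandwich e (S.inv γ))
      = S.sandwich e (S.comp γ (S.inv γ)) := by rw [sandwich_comp (S.d_inv γ).symm, hfix]
    _ = S.id e := by rw [comp_inv, hd, sandwich_id, he, he]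

lemma sandwich_inv_comp_of_mem_bowtiePi (he : e * e = e) {γ : G} (hγ : γ ∈ bowtiePi S e) :
    S.comp (S.sandwich e (S.inv γ)) γ = S.id e := by
  obtain ⟨-, hr, hfix⟩ := (mem_bowtiePi_iff he).1 hγ
  calc S.comp (S.sandwich e (S.inv γ)) γ
      = S.sandwich e (S.comp (S.inv γ) γ) := by rw [sandwich_comp (S.r_inv γ), hfix]
    _ = S.id e := by rw [inv_comp, hr, sandwich_id, he, he]

end SemiregularGroupoid

open SemiregularGroupoid

/-- in a pseudoregular groupoid, for an idempotent `e` of the inverse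
monoid `V(G)`, the operations `∗` and `∘` coincide on `π_e^⋈(G)`, and `π_e^⋈(G)` is a
group under this operation (with identity `1_e`). -/
theorem stmt9 {V : Type*} [InverseMonoid V] {G : Type*}
    (S : SemiregularGroupoid V G) (e : V) (he : e * e = e) :
    (∀ γ ∈ bowtiePi S e, ∀ δ ∈ bowtiePi S e, S.star γ δ = S.comp γ δ) ∧
    (∀ γ ∈ bowtiePi S e, ∀ δ ∈ bowtiePi S e, S.star γ δ ∈ bowtiePi S e) ∧
    (∀ γ ∈ bowtiePi S e, ∀ δ ∈ bowtiePi S e, ∀ η ∈ bowtiePi S e,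
      S.star (S.star γ δ) η = S.star γ (S.star δ η)) ∧
    (S.id e ∈ bowtiePi S e) ∧
    (∀ γ ∈ bowtiePi S e, S.star (S.id e) γ = γ ∧ S.star γ (S.id e) = γ) ∧
    (∀ γ ∈ bowtiePi S e, ∃ δ ∈ bowtiePi S e,
      S.star γ δ = S.id e ∧ S.star δ γ = S.id e) := by
  have star_eq := @star_eq_comp_of_mem_bowtiePi _ _ _ S e he
  have comp_mem := @comp_mem_bowtiePi _ _ _ S e he
  have id_mem := id_mem_bowtiePi (S := S) he
  refine ⟨fun γ hγ δ hδ => star_eq hγ hδ, fun γ hγ δ hδ => star_eq hγ hδ ▸ comp_mem hγ hδ, ?_, id_mem, ?_, ?_⟩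
  · intro γ hγ δ hδ η hη
    obtain ⟨-, hγr, -⟩ := (mem_bowtiePi_iff he).1 hγ
    obtain ⟨hδd, hδr, -⟩ := (mem_bowtiePi_iff he).1 hδ
    obtain ⟨hηd, -, -⟩ := (mem_bowtiePi_iff he).1 hη
    rw [star_eq hγ hδ, star_eq hδ hη, star_eq (comp_mem hγ hδ) hη,
      star_eq hγ (comp_mem hδ hη), S.comp_assoc _ _ _ (hγr.trans hδd.symm) (hδr.trans hηd.symm)]
  · intro γ hγ
    obtain ⟨hd, hr, -⟩ := (mem_bowtiePi_iff he).1 hγ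
    rw [star_eq id_mem hγ, star_eq hγ id_mem]
    exact ⟨hd ▸ S.id_comp γ, hr ▸ S.comp_id γ⟩
  · intro γ hγ
    obtain ⟨hd, hr, -⟩ := (mem_bowtiePi_iff he).1 hγ
    have hinv := sandwich_mem_bowtiePi he ((S.d_inv γ).trans hr) ((S.r_inv γ).trans hd)
    refine ⟨_, hinv, ?_, ?_⟩
    · rw [star_eq hγ hinv, comp_sandwich_inv_of_mem_bowtiePi he hγ]
    · rw [star_eq hinv hγ, sandwich_inv_comp_of_mem_bowtiePi he hγ]
end

section
/- Let G be a monoidal pseudoregular groupoid (the operations ∗ and ⊛ coincide). Then for each idempotent e of V(G), the group π_e^⋈(G) is abelian. -/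
/-! Both actions of the idempotent `e` fix every arrow of `π_e^⋈(G)`, and these arrows run from
`e` to `e`. Hence `γ ⊛ δ` and `δ ∗ γ` both collapse to the composite `δ ∘ γ`, and monoidality
turns `γ ∗ δ` into `γ ⊛ δ`. -/

namespace SemiregularGroupoid

variable {V : Type*} {G : Type*}

theorem ostar_eq_star_swap [Monoid V] (S : SemiregularGroupoid V G) {e : V} {γ δ : G}
    (hdγ : S.d γ = e) (hγL : S.actL e γ = γ) (hγR : S.actR γ e = γ)
    (hrδ : S.r δ = e) (hδL : S.actL e δ = δ) (hδR : S.actR δ e = δ) :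
    S.ostar γ δ = S.star δ γ := by
  rw [ostar, star, hdγ, hrδ, hγR, hγL, hδL, hδR]

variable [InverseMonoid V] (S : SemiregularGroupoid V G) {e : V}

theorem d_eq_of_mem_bowtieStar (he : e * e = e) {γ : G} (hγ : γ ∈ bowtieStar S e) :
    S.d γ = e := by
  obtain ⟨α, hα, rfl⟩ := hγ
  rw [S.d_actL, S.d_actR, hα, he, he]

theorem actL_eq_of_mem_bowtieStar (he : e * e = e) {γ : G} (hγ : γ ∈ bowtieStar S e) :
    S.actL e γ = γ := by
  obtain ⟨α, -, rfl⟩ := hγ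
  rw [← S.actL_mul, he]

theorem actR_eq_of_mem_bowtieStar (he : e * e = e) {γ : G} (hγ : γ ∈ bowtieStar S e) :
    S.actR γ e = γ := by
  obtain ⟨α, -, rfl⟩ := hγ
  rw [S.actL_actR, ← S.actR_mul, he]

end SemiregularGroupoid

/-- in a monoidal pseudoregular groupoid (where `∗` and `⊛` coincide),
the group `π_e^⋈(G)` is abelian for each idempotent `e` of `V(G)`. -/
theorem stmt10 {V : Type*} [InverseMonoid V] {G : Type*}
    (S : SemiregularGroupoid V G)
    (hmonoidal : ∀ α β : G, S.star α β = S.ostar α β)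
    (e : V) (he : e * e = e) :
    ∀ γ ∈ bowtiePi S e, ∀ δ ∈ bowtiePi S e, S.star γ δ = S.star δ γ := by
  rintro γ ⟨hγ, -⟩ δ ⟨hδ, hrδ⟩
  rw [hmonoidal]
  exact S.ostar_eq_star_swap (S.d_eq_of_mem_bowtieStar he hγ)
    (S.actL_eq_of_mem_bowtieStar he hγ) (S.actR_eq_of_mem_bowtieStar he hγ) hrδ
    (S.actL_eq_of_mem_bowtieStar he hδ) (S.actR_eq_of_mem_bowtieStar he hδ)
end

section
/- If C →∂ G ⇉ V is a free crossed module of groupoids with basis ω : R → G, then the abelianization C^{ab} = ⊔_{e∈V} C_e^{ab} is a free module over the quotient groupoid Q = G/∂C, with basis the image of the induced map R → C^{ab}. -/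
/-- A groupoid given algebraically: arrows `G` over vertices `V`, with totalised
composition whose axioms are guarded by the composability condition `r α = d β`. -/
structure AlgGroupoid (V : Type*) (G : Type*) where
  d : G → V
  r : G → V
  comp : G → G → G
  idm : V → G
  inv : G → G
  d_idm : ∀ v, d (idm v) = v
  r_idm : ∀ v, r (idm v) = v
  d_comp : ∀ α β, r α = d β → d (comp α β) = d α
  r_comp : ∀ α β, r α = d β → r (comp α β) = r β
  comp_assoc : ∀ α β γ, r α = d β → r β = d γ →
    comp (comp α β) γ = comp α (comp β γ)
  idm_comp : ∀ α, comp (idm (d α)) α = α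
  comp_idm : ∀ α, comp α (idm (r α)) = α
  d_inv : ∀ α, d (inv α) = r α
  r_inv : ∀ α, r (inv α) = d α
  comp_inv : ∀ α, comp α (inv α) = idm (d α)
  inv_comp : ∀ α, comp (inv α) α = idm (r α)

/-- A crossed module of groupoids over the groupoid `𝒢` (with vertex set `V` and arrow
set `G`): a totally intransitive groupoid `base` on arrows `C` over the same vertices
(i.e. a disjoint union of groups `C_e`, `e ∈ V`, since `d = r` on `C`), a groupoid
morphism `δ : C → G` over the identity on `V`, and an action of `G` on `C` satisfying
`(c^g)δ = g⁻¹ (cδ) g` and `c^{aδ} = a⁻¹ c a`. -/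
structure CrossedModuleOver {V G : Type*} (𝒢 : AlgGroupoid V G) (C : Type*) where
  base : AlgGroupoid V C
  fib : ∀ c : C, base.d c = base.r c
  δ : C → G
  δ_d : ∀ c, 𝒢.d (δ c) = base.d c
  δ_r : ∀ c, 𝒢.r (δ c) = base.d c
  δ_comp : ∀ c c', base.d c = base.d c' → δ (base.comp c c') = 𝒢.comp (δ c) (δ c')
  δ_idm : ∀ v, δ (base.idm v) = 𝒢.idm v
  act : C → G → C
  act_d : ∀ c g, base.d c = 𝒢.d g → base.d (act c g) = 𝒢.r g
  act_idm : ∀ c v, base.d c = v → act c (𝒢.idm v) = c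
  act_comp : ∀ c g h, base.d c = 𝒢.d g → 𝒢.r g = 𝒢.d h →
    act c (𝒢.comp g h) = act (act c g) h
  act_mul : ∀ c c' g, base.d c = base.d c' → base.d c = 𝒢.d g →
    act (base.comp c c') g = base.comp (act c g) (act c' g)
  act_one : ∀ v g, v = 𝒢.d g → act (base.idm v) g = base.idm (𝒢.r g)
  cm1 : ∀ c g, base.d c = 𝒢.d g →
    δ (act c g) = 𝒢.comp (𝒢.comp (𝒢.inv g) (δ c)) g
  cm2 : ∀ c a, base.d c = base.d a →
    act c (δ a) = base.comp (base.comp (base.inv a) c) a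

/-- A morphism of crossed modules over `𝒢` (covering the identity of `𝒢`): a map of
the total spaces preserving fibers, fiberwise products, identities and the `G`-action. -/
def IsCMHom {V G C C' : Type*} {𝒢 : AlgGroupoid V G}
    (X : CrossedModuleOver 𝒢 C) (Y : CrossedModuleOver 𝒢 C') (f : C → C') : Prop :=
  (∀ c, Y.base.d (f c) = X.base.d c) ∧
  (∀ c c', X.base.d c = X.base.d c' →
    f (X.base.comp c c') = Y.base.comp (f c) (f c')) ∧
  (∀ v, f (X.base.idm v) = Y.base.idm v) ∧
  (∀ c g, X.base.d c = 𝒢.d g → f (X.act c g) = Y.act (f c) g)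

universe u

/-!
Let `Y` be a `Q`-module. The fibre product `C ×_V C'`, with boundary and action taken from `C`
on the first factor and the action of `𝒢` on both, is again a crossed module over `𝒢`: the only
axiom at stake is `c^{aδ} = a⁻¹ c a` on the second factor, where `aδ` acts trivially and the
fibres of `C'` are abelian because `Y` has trivial boundary. Freeness of `C` then yields a morphism
`F : C → C ×_V C'` with `F (ν s) = (ν s, ν' s)`; its second component is the required extension.
Any other extension `g` has a graph `c ↦ (c, g c)` that is a morphism agreeing with `F` on the
basis, hence equal to `F`, so `g` is the second component of `F`.
-/

theorem IsCMHom.comp {V G C C' C'' : Type*} {𝒢 : AlgGroupoid V G}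
    {X : CrossedModuleOver 𝒢 C} {Y : CrossedModuleOver 𝒢 C'} {Z : CrossedModuleOver 𝒢 C''}
    {f : C → C'} {g : C' → C''} (hf : IsCMHom X Y f) (hg : IsCMHom Y Z g) :
    IsCMHom X Z (g ∘ f) := by
  obtain ⟨hf_d, hf_comp, hf_idm, hf_act⟩ := hf
  obtain ⟨hg_d, hg_comp, hg_idm, hg_act⟩ := hg
  refine ⟨fun c => (hg_d _).trans (hf_d c), fun c c' h => ?_, fun v => ?_, fun c g h => ?_⟩
  · simp only [Function.comp_apply, hf_comp c c' h]
    exact hg_comp _ _ ((hf_d c).trans (h.trans (hf_d c').symm))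
  · simp only [Function.comp_apply, hf_idm, hg_idm]
  · simp only [Function.comp_apply, hf_act c g h]
    exact hg_act _ _ ((hf_d c).trans h)

theorem CrossedModuleOver.conj_eq_self_of_δ_trivial {V G C : Type*} {𝒢 : AlgGroupoid V G}
    (Y : CrossedModuleOver 𝒢 C) (hδ : ∀ c, Y.δ c = 𝒢.idm (Y.base.d c))
    {c a : C} (h : Y.base.d c = Y.base.d a) :
    Y.base.comp (Y.base.comp (Y.base.inv a) c) a = c := by
  rw [← Y.cm2 c a h, hδ a, Y.act_idm c _ h]

@[ext]
structure FiberProd {V G C C' : Type*} {𝒢 : AlgGroupoid V G}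
    (X : CrossedModuleOver 𝒢 C) (Y : CrossedModuleOver 𝒢 C') where
  fst : C
  snd : C'
  d_eq : X.base.d fst = Y.base.d snd

namespace FiberProd

variable {V G C C' : Type*} {𝒢 : AlgGroupoid V G}
  {X : CrossedModuleOver 𝒢 C} {Y : CrossedModuleOver 𝒢 C'}

def vertex (p : FiberProd X Y) : V := X.base.d p.fst

theorem vertex_eq_snd (p : FiberProd X Y) : p.vertex = Y.base.d p.snd := p.d_eq

theorem r_fst (p : FiberProd X Y) : X.base.r p.fst = p.vertex := (X.fib _).symm

theorem r_snd (p : FiberProd X Y) : Y.base.r p.snd = p.vertex :=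
  (Y.fib _).symm.trans p.vertex_eq_snd.symm

variable (X Y) in
def idm (v : V) : FiberProd X Y :=
  ⟨X.base.idm v, Y.base.idm v, by rw [X.base.d_idm, Y.base.d_idm]⟩

def inv (p : FiberProd X Y) : FiberProd X Y :=
  ⟨X.base.inv p.fst, Y.base.inv p.snd, by rw [X.base.d_inv, Y.base.d_inv, r_fst, r_snd]⟩

open scoped Classical in
/-- Fibrewise product; the junk value `p` is returned when `p` and `q` lie in different fibres. -/
noncomputable def comp (p q : FiberProd X Y) : FiberProd X Y :=
  if h : p.vertex = q.vertex then
    ⟨X.base.comp p.fst q.fst, Y.base.comp p.snd q.snd, by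
      rw [X.base.d_comp _ _ (p.r_fst.trans h),
        Y.base.d_comp _ _ (p.r_snd.trans (h.trans q.vertex_eq_snd))]
      exact p.d_eq⟩
  else p

open scoped Classical in
/-- The action of `𝒢` on both factors; the junk value `p` is returned when `g` does not start
at the fibre of `p`. -/
noncomputable def act (p : FiberProd X Y) (g : G) : FiberProd X Y :=
  if h : p.vertex = 𝒢.d g then
    ⟨X.act p.fst g, Y.act p.snd g, by
      rw [X.act_d _ _ h, Y.act_d _ _ (p.vertex_eq_snd.symm.trans h)]⟩
  else p

section

variable {p q : FiberProd X Y}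

@[simp] theorem idm_fst (v : V) : (idm X Y v).fst = X.base.idm v := rfl
@[simp] theorem idm_snd (v : V) : (idm X Y v).snd = Y.base.idm v := rfl
@[simp] theorem inv_fst : p.inv.fst = X.base.inv p.fst := rfl
@[simp] theorem inv_snd : p.inv.snd = Y.base.inv p.snd := rfl

theorem comp_fst (h : p.vertex = q.vertex) : (comp p q).fst = X.base.comp p.fst q.fst := by
  rw [comp, dif_pos h]

theorem comp_snd (h : p.vertex = q.vertex) : (comp p q).snd = Y.base.comp p.snd q.snd := by
  rw [comp, dif_pos h]

theorem act_fst {g : G} (h : p.vertex = 𝒢.d g) : (act p g).fst = X.act p.fst g := by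
  rw [act, dif_pos h]

theorem act_snd {g : G} (h : p.vertex = 𝒢.d g) : (act p g).snd = Y.act p.snd g := by
  rw [act, dif_pos h]

@[simp] theorem vertex_idm (v : V) : (idm X Y v).vertex = v := X.base.d_idm v

@[simp] theorem vertex_inv : p.inv.vertex = p.vertex := by
  rw [vertex, inv_fst, X.base.d_inv, r_fst]

theorem vertex_comp (h : p.vertex = q.vertex) : (comp p q).vertex = p.vertex := by
  rw [vertex, comp_fst h]
  exact X.base.d_comp _ _ (p.r_fst.trans h)

theorem vertex_act {g : G} (h : p.vertex = 𝒢.d g) : (act p g).vertex = 𝒢.r g := by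
  rw [vertex, act_fst h]
  exact X.act_d _ _ h

end

variable (X Y) in
noncomputable def groupoid : AlgGroupoid V (FiberProd X Y) where
  d := vertex
  r := vertex
  comp := comp
  idm := idm X Y
  inv := inv
  d_idm := vertex_idm
  r_idm := vertex_idm
  d_comp _ _ h := vertex_comp h
  r_comp _ _ h := (vertex_comp h).trans h
  comp_assoc p q r h₁ h₂ := by
    have hpq : (comp p q).vertex = r.vertex := (vertex_comp h₁).trans (h₁.trans h₂)
    have hqr : p.vertex = (comp q r).vertex := h₁.trans (vertex_comp h₂).symm
    ext
    · rw [comp_fst hpq, comp_fst hqr, comp_fst h₁, comp_fst h₂]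
      exact X.base.comp_assoc _ _ _ (p.r_fst.trans h₁) (q.r_fst.trans h₂)
    · rw [comp_snd hpq, comp_snd hqr, comp_snd h₁, comp_snd h₂]
      exact Y.base.comp_assoc _ _ _ (p.r_snd.trans (h₁.trans q.vertex_eq_snd))
        (q.r_snd.trans (h₂.trans r.vertex_eq_snd))
  idm_comp p := by
    have h : (idm X Y p.vertex).vertex = p.vertex := vertex_idm _
    ext
    · rw [comp_fst h, idm_fst]; exact X.base.idm_comp _
    · rw [comp_snd h, idm_snd, vertex_eq_snd]; exact Y.base.idm_comp _
  comp_idm p := by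
    have h : p.vertex = (idm X Y p.vertex).vertex := (vertex_idm _).symm
    ext
    · rw [comp_fst h, idm_fst, ← r_fst]; exact X.base.comp_idm _
    · rw [comp_snd h, idm_snd, ← r_snd]; exact Y.base.comp_idm _
  d_inv _ := vertex_inv
  r_inv _ := vertex_inv
  comp_inv p := by
    have h : p.vertex = p.inv.vertex := vertex_inv.symm
    ext
    · rw [comp_fst h, inv_fst, idm_fst]; exact X.base.comp_inv _
    · rw [comp_snd h, inv_snd, idm_snd, vertex_eq_snd]; exact Y.base.comp_inv _
  inv_comp p := by
    have h : p.inv.vertex = p.vertex := vertex_inv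
    ext
    · rw [comp_fst h, inv_fst, idm_fst, ← r_fst]; exact X.base.inv_comp _
    · rw [comp_snd h, inv_snd, idm_snd, ← r_snd]; exact Y.base.inv_comp _

theorem act_δ_eq_conj (hδY : ∀ c', Y.δ c' = 𝒢.idm (Y.base.d c'))
    (htriv : ∀ c' a, Y.base.d c' = X.base.d a → Y.act c' (X.δ a) = c')
    (p a : FiberProd X Y) (h : p.vertex = a.vertex) :
    act p (X.δ a.fst) = comp (comp a.inv p) a := by
  have hp : p.vertex = 𝒢.d (X.δ a.fst) := h.trans (X.δ_d a.fst).symm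
  have h₁ : a.inv.vertex = p.vertex := vertex_inv.trans h.symm
  have h₂ : (comp a.inv p).vertex = a.vertex := (vertex_comp h₁).trans vertex_inv
  ext
  · rw [act_fst hp, comp_fst h₂, comp_fst h₁, inv_fst]
    exact X.cm2 _ _ h
  · rw [act_snd hp, comp_snd h₂, comp_snd h₁, inv_snd, htriv _ _ (p.vertex_eq_snd.symm.trans h),
      Y.conj_eq_self_of_δ_trivial hδY (p.vertex_eq_snd.symm.trans (h.trans a.vertex_eq_snd))]

variable (X Y) in
noncomputable def crossedModule (hδY : ∀ c', Y.δ c' = 𝒢.idm (Y.base.d c'))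
    (htriv : ∀ c' a, Y.base.d c' = X.base.d a → Y.act c' (X.δ a) = c') :
    CrossedModuleOver 𝒢 (FiberProd X Y) where
  base := groupoid X Y
  fib _ := rfl
  δ p := X.δ p.fst
  δ_d p := X.δ_d p.fst
  δ_r p := X.δ_r p.fst
  δ_comp p q h := by
    simp only [groupoid, comp_fst h]
    exact X.δ_comp _ _ h
  δ_idm := X.δ_idm
  act := act
  act_d _ _ h := vertex_act h
  act_idm p v h := by
    have hp : p.vertex = 𝒢.d (𝒢.idm v) := h.trans (𝒢.d_idm v).symm
    ext
    · rw [act_fst hp]; exact X.act_idm _ _ h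
    · rw [act_snd hp]; exact Y.act_idm _ _ (p.vertex_eq_snd.symm.trans h)
  act_comp p g g' hg hg' := by
    have hp : p.vertex = 𝒢.d (𝒢.comp g g') := hg.trans (𝒢.d_comp _ _ hg').symm
    have hpg : (act p g).vertex = 𝒢.d g' := (vertex_act hg).trans hg'
    ext
    · rw [act_fst hp, act_fst hpg, act_fst hg]; exact X.act_comp _ _ _ hg hg'
    · rw [act_snd hp, act_snd hpg, act_snd hg]
      exact Y.act_comp _ _ _ (p.vertex_eq_snd.symm.trans hg) hg'
  act_mul p q g h hg := by
    have hq : q.vertex = 𝒢.d g := h.symm.trans hg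
    have hpq : (comp p q).vertex = 𝒢.d g := (vertex_comp h).trans hg
    have hpgqg : (act p g).vertex = (act q g).vertex := (vertex_act hg).trans (vertex_act hq).symm
    change act (comp p q) g = comp (act p g) (act q g)
    ext
    · rw [act_fst hpq, comp_fst h, comp_fst hpgqg, act_fst hg, act_fst hq]
      exact X.act_mul _ _ _ h hg
    · rw [act_snd hpq, comp_snd h, comp_snd hpgqg, act_snd hg, act_snd hq]
      exact Y.act_mul _ _ _ (p.vertex_eq_snd.symm.trans (h.trans q.vertex_eq_snd))
        (p.vertex_eq_snd.symm.trans hg)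
  act_one v g h := by
    have hv : (idm X Y v).vertex = 𝒢.d g := (vertex_idm v).trans h
    change act (idm X Y v) g = idm X Y (𝒢.r g)
    ext
    · rw [act_fst hv]; exact X.act_one _ _ h
    · rw [act_snd hv]; exact Y.act_one _ _ h
  cm1 p g h := by
    simp only [act_fst h]
    exact X.cm1 _ _ h
  cm2 := act_δ_eq_conj hδY htriv

variable (hδY : ∀ c', Y.δ c' = 𝒢.idm (Y.base.d c'))
  (htriv : ∀ c' a, Y.base.d c' = X.base.d a → Y.act c' (X.δ a) = c')

theorem isCMHom_snd : IsCMHom (crossedModule X Y hδY htriv) Y snd :=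
  ⟨fun p => p.vertex_eq_snd.symm, fun _ _ h => comp_snd h, fun _ => rfl, fun _ _ h => act_snd h⟩

def graph (f : C → C') (hf : ∀ c, Y.base.d (f c) = X.base.d c) (c : C) : FiberProd X Y :=
  ⟨c, f c, (hf c).symm⟩

theorem isCMHom_graph {f : C → C'} (hf : IsCMHom X Y f) :
    IsCMHom X (crossedModule X Y hδY htriv) (graph f hf.1) := by
  obtain ⟨hf_d, hf_comp, hf_idm, hf_act⟩ := hf
  refine ⟨fun _ => rfl, fun c c' h => ?_, fun v => ?_, fun c g h => ?_⟩
  · have h' : (graph f hf_d c).vertex = (graph f hf_d c').vertex := h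
    ext
    · exact (comp_fst h').symm
    · exact (hf_comp c c' h).trans (comp_snd h').symm
  · exact FiberProd.ext rfl (hf_idm v)
  · have h' : (graph f hf_d c).vertex = 𝒢.d g := h
    ext
    · exact (act_fst h').symm
    · exact (hf_act c g h).trans (act_snd h').symm

end FiberProd

/-- A `Q`-module is modelled as a crossed `𝒢`-module `Y` with trivial boundary on which `∂C` acts
trivially; crossed-module morphisms `C → Y` correspond exactly to `Q`-module maps `C^{ab} → Y`. -/
theorem stmt13_general {V G C R : Type u} (𝒢 : AlgGroupoid V G) (X : CrossedModuleOver 𝒢 C)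
    (ω : R → G)
    (ν : R → C) (hν : ∀ s, X.δ (ν s) = ω s)
    -- `X` is the free crossed module on `ω` with basis map `ν`:
    (hfree : ∀ (C' : Type u) (Y : CrossedModuleOver 𝒢 C') (σ : R → C'),
      (∀ s, Y.δ (σ s) = ω s) →
      ∃! f : C → C', IsCMHom X Y f ∧ ∀ s, f (ν s) = σ s) :
    -- conclusion: `C^{ab}` is the free `Q`-module on (the image of) `R`:
    ∀ (C' : Type u) (Y : CrossedModuleOver 𝒢 C'),
      (∀ c', Y.δ c' = 𝒢.idm (Y.base.d c')) →            -- `Y` has trivial boundary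
      (∀ c' a, Y.base.d c' = X.base.d a → Y.act c' (X.δ a) = c') →  -- `∂C` acts trivially
      ∀ ν' : R → C', (∀ s, Y.base.d (ν' s) = 𝒢.d (ω s)) →
        ∃! f : C → C', IsCMHom X Y f ∧ ∀ s, f (ν s) = ν' s := by
  intro C' Y hδY htriv ν' hν'
  have hνd : ∀ s, X.base.d (ν s) = Y.base.d (ν' s) := fun s => by
    rw [← X.δ_d, hν, hν']
  obtain ⟨F, ⟨hF, hFν⟩, hF_unique⟩ :=
    hfree _ (FiberProd.crossedModule X Y hδY htriv) (fun s => ⟨ν s, ν' s, hνd s⟩) hν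
  refine ⟨FiberProd.snd ∘ F, ⟨hF.comp (FiberProd.isCMHom_snd hδY htriv), fun s => ?_⟩, ?_⟩
  · simp only [Function.comp_apply, hFν]
  rintro g ⟨hg, hgν⟩
  have graph_eq : FiberProd.graph g hg.1 = F :=
    hF_unique _ ⟨FiberProd.isCMHom_graph hδY htriv hg, fun s => FiberProd.ext rfl (hgν s)⟩
  rw [← graph_eq]
  rfl

/-- if `C → G` is a free crossed module of groupoids with basis
`ω : R → G` (with basis map `ν : R → C`), then `C^{ab}` is a free module over the
quotient groupoid `Q = G/∂C` on the image of `R`.  A `Q`-module is a crossed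
`G`-module `Y` with trivial boundary on which `∂C` acts trivially; freeness of
`C^{ab}` is expressed by the universal property: every fiberwise-compatible map
`ν' : R → Y` extends to a unique morphism `C → Y` of crossed modules sending `ν s`
to `ν' s` (such morphisms correspond exactly to `Q`-module maps `C^{ab} → Y`). -/
theorem stmt13 {V G C R : Type u} (𝒢 : AlgGroupoid V G) (X : CrossedModuleOver 𝒢 C)
    (ω : R → G) (hω : ∀ s, 𝒢.d (ω s) = 𝒢.r (ω s))
    (ν : R → C) (hν : ∀ s, X.δ (ν s) = ω s)
    -- `X` is the free crossed module on `ω` with basis map `ν`: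
    (hfree : ∀ (C' : Type u) (Y : CrossedModuleOver 𝒢 C') (σ : R → C'),
      (∀ s, Y.δ (σ s) = ω s) →
      ∃! f : C → C', IsCMHom X Y f ∧ ∀ s, f (ν s) = σ s) :
    -- conclusion: `C^{ab}` is the free `Q`-module on (the image of) `R`:
    ∀ (C' : Type u) (Y : CrossedModuleOver 𝒢 C'),
      (∀ c', Y.δ c' = 𝒢.idm (Y.base.d c')) →            -- `Y` has trivial boundary
      (∀ c' a, Y.base.d c' = X.base.d a → Y.act c' (X.δ a) = c') →  -- `∂C` acts trivially
      ∀ ν' : R → C', (∀ s, Y.base.d (ν' s) = 𝒢.d (ω s)) →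
        ∃! f : C → C', IsCMHom X Y f ∧ ∀ s, f (ν s) = ν' s :=
  stmt13_general 𝒢 X ω ν hν hfree
end

section
/- Let G be a groupoid, R a set, and ω : R → G a function with ωd = ωr. For e ∈ V(G), let F_e be the free group on pairs (s,g) with s ∈ R, (sω)d = gg⁻¹ and g⁻¹g = e, with map δ : (s,g) ↦ g⁻¹(sω)g and G-action (s,g)^h = (s,gh). Let P_e be the subgroup of F_e generated by Peiffer elements u⁻¹v⁻¹u v^{uδ} for u,v ∈ F_e. Then P_e is normal in F_e, invariant under the G-action, and contained in the kernel of δ, so that δ induces a crossed G-module structure ∂ : ⊔_e F_e/P_e → G, and this crossed module is free on ω. -/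
variable {V G : Type*}

/-- The local group of the groupoid `𝒢` at a vertex `e`. -/
def LocalGroup (𝒢 : AlgGroupoid V G) (e : V) : Type _ :=
  {g : G // 𝒢.d g = e ∧ 𝒢.r g = e}

instance (𝒢 : AlgGroupoid V G) (e : V) : Group (LocalGroup 𝒢 e) where
  one := ⟨𝒢.idm e, 𝒢.d_idm e, 𝒢.r_idm e⟩
  mul a b := ⟨𝒢.comp a.1 b.1, by
    have hg : 𝒢.r a.1 = 𝒢.d b.1 := by rw [a.2.2, b.2.1]
    rw [𝒢.d_comp _ _ hg]; exact a.2.1, by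
    have hg : 𝒢.r a.1 = 𝒢.d b.1 := by rw [a.2.2, b.2.1]
    rw [𝒢.r_comp _ _ hg]; exact b.2.2⟩
  inv a := ⟨𝒢.inv a.1, by rw [𝒢.d_inv]; exact a.2.2, by rw [𝒢.r_inv]; exact a.2.1⟩
  mul_assoc a b c := by
    apply Subtype.ext
    exact 𝒢.comp_assoc a.1 b.1 c.1 (by rw [a.2.2, b.2.1]) (by rw [b.2.2, c.2.1])
  one_mul a := by
    apply Subtype.ext
    have h := 𝒢.idm_comp a.1
    rw [a.2.1] at h
    exact h
  mul_one a := by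
    apply Subtype.ext
    have h := 𝒢.comp_idm a.1
    rw [a.2.2] at h
    exact h
  inv_mul_cancel a := by
    apply Subtype.ext
    have h := 𝒢.inv_comp a.1
    rw [a.2.2] at h
    exact h

variable {R : Type*}

/-- The pairs `(s, g)` with `s ∈ R`, `(sω)d = gg⁻¹` and `g⁻¹g = e`, i.e.
`d (ω s) = d g` and `r g = e`. -/
def Pairs (𝒢 : AlgGroupoid V G) (ω : R → G) (e : V) : Type _ :=
  {p : R × G // 𝒢.d (ω p.1) = 𝒢.d p.2 ∧ 𝒢.r p.2 = e}

/-- The map `δ` on generators: `(s, g) ↦ g⁻¹ (sω) g`. -/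
def deltaGen (𝒢 : AlgGroupoid V G) (ω : R → G) (hω : ∀ s, 𝒢.d (ω s) = 𝒢.r (ω s))
    (e : V) (p : Pairs 𝒢 ω e) : LocalGroup 𝒢 e := by
  refine ⟨𝒢.comp (𝒢.comp (𝒢.inv p.1.2) (ω p.1.1)) p.1.2, ?_, ?_⟩
  · have h1 : 𝒢.r (𝒢.inv p.1.2) = 𝒢.d (ω p.1.1) := by rw [𝒢.r_inv]; exact p.2.1.symm
    have h2 : 𝒢.r (𝒢.comp (𝒢.inv p.1.2) (ω p.1.1)) = 𝒢.d p.1.2 := by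
      rw [𝒢.r_comp _ _ h1, ← hω p.1.1]; exact p.2.1
    rw [𝒢.d_comp _ _ h2, 𝒢.d_comp _ _ h1, 𝒢.d_inv]; exact p.2.2
  · have h1 : 𝒢.r (𝒢.inv p.1.2) = 𝒢.d (ω p.1.1) := by rw [𝒢.r_inv]; exact p.2.1.symm
    have h2 : 𝒢.r (𝒢.comp (𝒢.inv p.1.2) (ω p.1.1)) = 𝒢.d p.1.2 := by
      rw [𝒢.r_comp _ _ h1, ← hω p.1.1]; exact p.2.1
    rw [𝒢.r_comp _ _ h2]; exact p.2.2

/-- The homomorphism `δ : F_e →* LocalGroup 𝒢 e` induced on the free group. -/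
noncomputable def deltaHom (𝒢 : AlgGroupoid V G) (ω : R → G)
    (hω : ∀ s, 𝒢.d (ω s) = 𝒢.r (ω s)) (e : V) :
    FreeGroup (Pairs 𝒢 ω e) →* LocalGroup 𝒢 e :=
  FreeGroup.lift (deltaGen 𝒢 ω hω e)

/-- The action of the local group at `e` on generators: `(s, g)^h = (s, gh)`. -/
def conjAct (𝒢 : AlgGroupoid V G) (ω : R → G) (e : V) (h : LocalGroup 𝒢 e) :
    FreeGroup (Pairs 𝒢 ω e) →* FreeGroup (Pairs 𝒢 ω e) :=
  FreeGroup.map fun p => ⟨(p.1.1, 𝒢.comp p.1.2 h.1), by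
    have hg : 𝒢.r p.1.2 = 𝒢.d h.1 := by rw [p.2.2, h.2.1]
    exact ⟨by rw [𝒢.d_comp _ _ hg]; exact p.2.1, by rw [𝒢.r_comp _ _ hg]; exact h.2.2⟩⟩

/-- The `G`-action of an arrow `h` on free groups: `F_{d h} → F_{r h}`, `(s,g) ↦ (s, gh)`. -/
def mapAlong (𝒢 : AlgGroupoid V G) (ω : R → G) (h : G) :
    FreeGroup (Pairs 𝒢 ω (𝒢.d h)) →* FreeGroup (Pairs 𝒢 ω (𝒢.r h)) :=
  FreeGroup.map fun p => ⟨(p.1.1, 𝒢.comp p.1.2 h), by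
    exact ⟨by rw [𝒢.d_comp _ _ p.2.2]; exact p.2.1, by rw [𝒢.r_comp _ _ p.2.2]⟩⟩

/-- The Peiffer subgroup `P_e ≤ F_e`, generated by the elements
`u⁻¹ v⁻¹ u v^{uδ}`. -/
noncomputable def peifferSubgroup (𝒢 : AlgGroupoid V G) (ω : R → G)
    (hω : ∀ s, 𝒢.d (ω s) = 𝒢.r (ω s)) (e : V) :
    Subgroup (FreeGroup (Pairs 𝒢 ω e)) :=
  Subgroup.closure
    {x | ∃ u v : FreeGroup (Pairs 𝒢 ω e),
      x = u⁻¹ * v⁻¹ * u * conjAct 𝒢 ω e (deltaHom 𝒢 ω hω e u) v}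

universe u

/-!
The Peiffer part of the argument only needs a pre-crossed module of groups: a homomorphism
`δ : F → H` and a right action of `H` on `F`. There the Peiffer commutators
`⟨u, v⟩ = u⁻¹ v⁻¹ u v^{uδ}` generate a normal subgroup; they are killed by `δ` once `δ` is equivariant, and carried to Peiffer
commutators by morphisms of pre-crossed modules. The free groups `F_e` with the shift action
`(s, g)^h = (s, gh)` form such a structure at every vertex, and transport along an arrow `h`
is a morphism from the one at `h d` to the one at `h r`.

For freeness, a morphism is forced on generators by `(s, g) ↦ (sσ)^g`; CM1 in the target
makes the induced homomorphism commute with the boundaries, and CM2 says exactly that it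
kills Peiffer commutators.
-/

section PeifferClosure

variable {F H : Type*} [Group F] [Group H] (δ : F →* H) (act : H → F →* F)

def peifferCommutators : Set F :=
  {x | ∃ u v : F, x = u⁻¹ * v⁻¹ * u * act (δ u) v}

def peifferClosure : Subgroup F :=
  Subgroup.closure (peifferCommutators δ act)

lemma peifferCommutator_mem (u v : F) :
    u⁻¹ * v⁻¹ * u * act (δ u) v ∈ peifferClosure δ act :=
  Subgroup.subset_closure ⟨u, v, rfl⟩

variable {δ act}

/-- The Peiffer commutator identity `⟨u, v⟩^w = ⟨uw, v⟩ ⟨w, v^{uδ}⟩⁻¹` makes the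
generating set closed under conjugation. -/
theorem peifferClosure_normal (hact : ∀ a b, act (a * b) = (act b).comp (act a)) :
    (peifferClosure δ act).Normal := by
  have hconj : Group.conjugatesOfSet (peifferCommutators δ act) ⊆ peifferClosure δ act := by
    intro x hx
    obtain ⟨_, ⟨u, v, rfl⟩, hc⟩ := Group.mem_conjugatesOfSet_iff.1 hx
    obtain ⟨c, rfl⟩ := isConj_iff.1 hc
    have hid : c * (u⁻¹ * v⁻¹ * u * act (δ u) v) * c⁻¹ =
        ((u * c⁻¹)⁻¹ * v⁻¹ * (u * c⁻¹) * act (δ (u * c⁻¹)) v) *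
          (c⁻¹⁻¹ * (act (δ u) v)⁻¹ * c⁻¹ * act (δ c⁻¹) (act (δ u) v))⁻¹ := by
      rw [map_mul, hact, MonoidHom.comp_apply]
      group
    rw [hid]
    exact mul_mem (peifferCommutator_mem δ act _ v)
      (inv_mem (peifferCommutator_mem δ act c⁻¹ _))
  have heq : peifferClosure δ act = Subgroup.normalClosure (peifferCommutators δ act) :=
    le_antisymm Subgroup.closure_le_normalClosure ((Subgroup.closure_le _).2 hconj)
  rw [heq]
  infer_instance

theorem act_mul_inv_conj_mem_peifferClosure
    (hact : ∀ a b, act (a * b) = (act b).comp (act a)) (u v : F) :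
    act (δ u) v * (u⁻¹ * v * u)⁻¹ ∈ peifferClosure δ act := by
  have h := (peifferClosure_normal hact).conj_mem _ (peifferCommutator_mem δ act u v)
    (act (δ u) v)
  convert h using 1
  group

theorem peifferClosure_le_ker {K : Type*} [Group K] (ψ : F →* K)
    (hψ : ∀ u v, ψ (act (δ u) v) = (ψ u)⁻¹ * ψ v * ψ u) :
    peifferClosure δ act ≤ ψ.ker := by
  rw [peifferClosure, Subgroup.closure_le]
  rintro _ ⟨u, v, rfl⟩
  rw [SetLike.mem_coe, MonoidHom.mem_ker, map_mul, map_mul, map_mul, map_inv, map_inv, hψ]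
  group

theorem peifferClosure_le_comap {F' H' : Type*} [Group F'] [Group H'] {δ' : F' →* H'}
    {act' : H' → F' →* F'} (f : F →* F') (φ : H →* H')
    (hδ : δ'.comp f = φ.comp δ) (hact : ∀ h, f.comp (act h) = (act' (φ h)).comp f) :
    peifferClosure δ act ≤ (peifferClosure δ' act').comap f := by
  rw [peifferClosure, Subgroup.closure_le]
  rintro _ ⟨u, v, rfl⟩
  rw [SetLike.mem_coe, Subgroup.mem_comap, map_mul, map_mul, map_mul, map_inv, map_inv,
    ← MonoidHom.comp_apply f, hact, MonoidHom.comp_apply, ← MonoidHom.comp_apply φ, ← hδ,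
    MonoidHom.comp_apply]
  exact peifferCommutator_mem δ' act' (f u) (f v)

end PeifferClosure

namespace AlgGroupoid

variable (𝒢 : AlgGroupoid V G)

lemma idm_comp_of_d_eq {a : G} {v : V} (h : 𝒢.d a = v) : 𝒢.comp (𝒢.idm v) a = a := by
  subst h; exact 𝒢.idm_comp a

lemma comp_idm_of_r_eq {a : G} {v : V} (h : 𝒢.r a = v) : 𝒢.comp a (𝒢.idm v) = a := by
  subst h; exact 𝒢.comp_idm a

lemma eq_inv_of_comp_eq_idm {a b : G} (hab : 𝒢.r a = 𝒢.d b)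
    (h : 𝒢.comp a b = 𝒢.idm (𝒢.d a)) : b = 𝒢.inv a := by
  have h2 : 𝒢.comp (𝒢.inv a) (𝒢.comp a b) = 𝒢.comp (𝒢.inv a) (𝒢.idm (𝒢.d a)) := by rw [h]
  rwa [← 𝒢.comp_assoc _ _ _ (𝒢.r_inv a) hab, 𝒢.inv_comp, 𝒢.idm_comp_of_d_eq hab.symm,
    𝒢.comp_idm_of_r_eq (𝒢.r_inv a)] at h2

lemma inv_comp_rev {a b : G} (hab : 𝒢.r a = 𝒢.d b) :
    𝒢.inv (𝒢.comp a b) = 𝒢.comp (𝒢.inv b) (𝒢.inv a) := by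
  have hba : 𝒢.r (𝒢.inv b) = 𝒢.d (𝒢.inv a) := by rw [𝒢.r_inv, 𝒢.d_inv, hab]
  have hd : 𝒢.d (𝒢.comp (𝒢.inv b) (𝒢.inv a)) = 𝒢.r b := by rw [𝒢.d_comp _ _ hba, 𝒢.d_inv]
  refine (𝒢.eq_inv_of_comp_eq_idm (by rw [𝒢.r_comp _ _ hab, hd]) ?_).symm
  rw [𝒢.d_comp _ _ hab, 𝒢.comp_assoc a b _ hab hd.symm,
    ← 𝒢.comp_assoc b (𝒢.inv b) (𝒢.inv a) (𝒢.d_inv b).symm hba, 𝒢.comp_inv,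
    𝒢.idm_comp_of_d_eq ((𝒢.d_inv a).trans hab), 𝒢.comp_inv]

def conj (x g : G) : G := 𝒢.comp (𝒢.comp (𝒢.inv g) x) g

variable {𝒢}

lemma d_conj {x g : G} (hd : 𝒢.d x = 𝒢.d g) (hr : 𝒢.r x = 𝒢.d g) :
    𝒢.d (𝒢.conj x g) = 𝒢.r g := by
  have h1 : 𝒢.r (𝒢.inv g) = 𝒢.d x := by rw [𝒢.r_inv, hd]
  rw [conj, 𝒢.d_comp _ _ (by rw [𝒢.r_comp _ _ h1, hr]), 𝒢.d_comp _ _ h1, 𝒢.d_inv]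

lemma r_conj {x g : G} (hd : 𝒢.d x = 𝒢.d g) (hr : 𝒢.r x = 𝒢.d g) :
    𝒢.r (𝒢.conj x g) = 𝒢.r g := by
  have h1 : 𝒢.r (𝒢.inv g) = 𝒢.d x := by rw [𝒢.r_inv, hd]
  rw [conj, 𝒢.r_comp _ _ (by rw [𝒢.r_comp _ _ h1, hr])]

lemma comp_comp_conj {p q g : G} (hp : 𝒢.r p = 𝒢.d g) (hd : 𝒢.d q = 𝒢.d g)
    (hr : 𝒢.r q = 𝒢.d g) :
    𝒢.comp (𝒢.comp p g) (𝒢.conj q g) = 𝒢.comp (𝒢.comp p q) g := by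
  rw [conj, 𝒢.comp_assoc (𝒢.inv g) q g (by rw [𝒢.r_inv, hd]) hr,
    ← 𝒢.comp_assoc (𝒢.comp p g) (𝒢.inv g) (𝒢.comp q g) (by rw [𝒢.r_comp _ _ hp, 𝒢.d_inv])
      (by rw [𝒢.r_inv, 𝒢.d_comp _ _ hr, hd]),
    𝒢.comp_assoc p g (𝒢.inv g) hp (𝒢.d_inv g).symm, 𝒢.comp_inv, 𝒢.comp_idm_of_r_eq hp,
    ← 𝒢.comp_assoc p q g (by rw [hp, hd]) hr]

lemma conj_comp {x y g : G} (hdx : 𝒢.d x = 𝒢.d g) (hrx : 𝒢.r x = 𝒢.d g)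
    (hdy : 𝒢.d y = 𝒢.d g) (hry : 𝒢.r y = 𝒢.d g) :
    𝒢.conj (𝒢.comp x y) g = 𝒢.comp (𝒢.conj x g) (𝒢.conj y g) := by
  have h1 : 𝒢.r (𝒢.inv g) = 𝒢.d x := by rw [𝒢.r_inv, hdx]
  rw [conj, ← 𝒢.comp_assoc (𝒢.inv g) x y h1 (by rw [hrx, hdy]),
    ← comp_comp_conj (by rw [𝒢.r_comp _ _ h1, hrx]) hdy hry]
  rfl

lemma conj_conj {x g h : G} (hd : 𝒢.d x = 𝒢.d g) (hr : 𝒢.r x = 𝒢.d g)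
    (hgh : 𝒢.r g = 𝒢.d h) :
    𝒢.conj (𝒢.conj x g) h = 𝒢.conj x (𝒢.comp g h) := by
  have h1 : 𝒢.r (𝒢.inv h) = 𝒢.d (𝒢.inv g) := by rw [𝒢.r_inv, 𝒢.d_inv, hgh]
  have h2 : 𝒢.r (𝒢.inv g) = 𝒢.d x := by rw [𝒢.r_inv, hd]
  have h3 : 𝒢.r (𝒢.comp (𝒢.comp (𝒢.inv h) (𝒢.inv g)) x) = 𝒢.d g := by
    rw [𝒢.r_comp _ _ (by rw [𝒢.r_comp _ _ h1, h2]), hr]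
  rw [conj, conj, conj, 𝒢.inv_comp_rev hgh, ← 𝒢.comp_assoc _ g h h3 hgh,
    ← 𝒢.comp_assoc (𝒢.inv h) (𝒢.comp (𝒢.inv g) x) g
      (by rw [𝒢.d_comp _ _ h2]; exact h1) (by rw [𝒢.r_comp _ _ h2, hr]),
    ← 𝒢.comp_assoc (𝒢.inv h) (𝒢.inv g) x h1 h2]

lemma conj_idm {g : G} : 𝒢.conj (𝒢.idm (𝒢.d g)) g = 𝒢.idm (𝒢.r g) := by
  rw [conj, 𝒢.comp_idm_of_r_eq (𝒢.r_inv g), 𝒢.inv_comp]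

end AlgGroupoid

def conjHom (𝒢 : AlgGroupoid V G) (h : G) :
    LocalGroup 𝒢 (𝒢.d h) →* LocalGroup 𝒢 (𝒢.r h) where
  toFun c := ⟨𝒢.conj c.1 h, 𝒢.d_conj c.2.1 c.2.2, 𝒢.r_conj c.2.1 c.2.2⟩
  map_one' := Subtype.ext 𝒢.conj_idm
  map_mul' a b := Subtype.ext (𝒢.conj_comp a.2.1 a.2.2 b.2.1 b.2.2)

section FreePreCrossedModule

variable (𝒢 : AlgGroupoid V G) (ω : R → G) (hω : ∀ s, 𝒢.d (ω s) = 𝒢.r (ω s))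

def Pairs.shift (e : V) (k : LocalGroup 𝒢 e) (p : Pairs 𝒢 ω e) : Pairs 𝒢 ω e :=
  ⟨(p.1.1, 𝒢.comp p.1.2 k.1), by
    have hg : 𝒢.r p.1.2 = 𝒢.d k.1 := p.2.2.trans k.2.1.symm
    exact ⟨(𝒢.d_comp _ _ hg).symm ▸ p.2.1, (𝒢.r_comp _ _ hg).trans k.2.2⟩⟩

def Pairs.along (h : G) (p : Pairs 𝒢 ω (𝒢.d h)) : Pairs 𝒢 ω (𝒢.r h) :=
  ⟨(p.1.1, 𝒢.comp p.1.2 h), (𝒢.d_comp _ _ p.2.2).symm ▸ p.2.1, 𝒢.r_comp _ _ p.2.2⟩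

lemma conjAct_of (e : V) (k : LocalGroup 𝒢 e) (p : Pairs 𝒢 ω e) :
    conjAct 𝒢 ω e k (.of p) = .of (Pairs.shift 𝒢 ω e k p) :=
  FreeGroup.map.of

lemma mapAlong_of (h : G) (p : Pairs 𝒢 ω (𝒢.d h)) :
    mapAlong 𝒢 ω h (.of p) = .of (Pairs.along 𝒢 ω h p) :=
  FreeGroup.map.of

lemma deltaHom_of (e : V) (p : Pairs 𝒢 ω e) :
    deltaHom 𝒢 ω hω e (.of p) = deltaGen 𝒢 ω hω e p :=
  FreeGroup.lift_apply_of

lemma conjAct_mul (e : V) (k₁ k₂ : LocalGroup 𝒢 e) :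
    conjAct 𝒢 ω e (k₁ * k₂) = (conjAct 𝒢 ω e k₂).comp (conjAct 𝒢 ω e k₁) := by
  ext p
  rw [MonoidHom.comp_apply, conjAct_of, conjAct_of, conjAct_of]
  exact congrArg FreeGroup.of (Subtype.ext (Prod.ext rfl
    (𝒢.comp_assoc _ _ _ (p.2.2.trans k₁.2.1.symm) (k₁.2.2.trans k₂.2.1.symm)).symm))

lemma deltaHom_conjAct (e : V) (k : LocalGroup 𝒢 e) (x : FreeGroup (Pairs 𝒢 ω e)) :
    deltaHom 𝒢 ω hω e (conjAct 𝒢 ω e k x) = k⁻¹ * deltaHom 𝒢 ω hω e x * k := by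
  have hom : (deltaHom 𝒢 ω hω e).comp (conjAct 𝒢 ω e k) =
      (MulAut.conj k⁻¹).toMonoidHom.comp (deltaHom 𝒢 ω hω e) := by
    ext p
    rw [MonoidHom.comp_apply, MonoidHom.comp_apply, conjAct_of, deltaHom_of, deltaHom_of,
      MulEquiv.coe_toMonoidHom, MulAut.conj_apply, inv_inv]
    exact Subtype.ext (𝒢.conj_conj p.2.1 ((hω p.1.1).symm.trans p.2.1)
      (p.2.2.trans k.2.1.symm)).symm
  simpa using DFunLike.congr_fun hom x

lemma deltaHom_mapAlong (h : G) :
    (deltaHom 𝒢 ω hω (𝒢.r h)).comp (mapAlong 𝒢 ω h) =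
      (conjHom 𝒢 h).comp (deltaHom 𝒢 ω hω (𝒢.d h)) := by
  ext p
  rw [MonoidHom.comp_apply, MonoidHom.comp_apply, mapAlong_of, deltaHom_of, deltaHom_of]
  exact Subtype.ext (𝒢.conj_conj p.2.1 ((hω p.1.1).symm.trans p.2.1) p.2.2).symm

lemma mapAlong_conjAct (h : G) (k : LocalGroup 𝒢 (𝒢.d h)) :
    (mapAlong 𝒢 ω h).comp (conjAct 𝒢 ω (𝒢.d h) k) =
      (conjAct 𝒢 ω (𝒢.r h) (conjHom 𝒢 h k)).comp (mapAlong 𝒢 ω h) := by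
  ext p
  rw [MonoidHom.comp_apply, MonoidHom.comp_apply, conjAct_of, mapAlong_of, mapAlong_of,
    conjAct_of]
  exact congrArg FreeGroup.of (Subtype.ext (Prod.ext rfl
    (AlgGroupoid.comp_comp_conj p.2.2 k.2.1 k.2.2).symm))

end FreePreCrossedModule

namespace CrossedModuleOver

variable {𝒢 : AlgGroupoid V G} {C : Type*} (Y : CrossedModuleOver 𝒢 C)

def deltaLocal (e : V) : LocalGroup Y.base e →* LocalGroup 𝒢 e where
  toFun c := ⟨Y.δ c.1, (Y.δ_d c.1).trans c.2.1, (Y.δ_r c.1).trans c.2.1⟩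
  map_one' := Subtype.ext (Y.δ_idm e)
  map_mul' a b := Subtype.ext (Y.δ_comp a.1 b.1 (a.2.1.trans b.2.1.symm))

def actAlong (h : G) : LocalGroup Y.base (𝒢.d h) →* LocalGroup Y.base (𝒢.r h) where
  toFun c := ⟨Y.act c.1 h, Y.act_d c.1 h c.2.1, (Y.fib _).symm.trans (Y.act_d c.1 h c.2.1)⟩
  map_one' := Subtype.ext (Y.act_one (𝒢.d h) h rfl)
  map_mul' a b := Subtype.ext (Y.act_mul a.1 b.1 h (a.2.1.trans b.2.1.symm) a.2.1)

def actLocal (e : V) (k : LocalGroup 𝒢 e) : LocalGroup Y.base e →* LocalGroup Y.base e where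
  toFun c := ⟨Y.act c.1 k.1, (Y.act_d c.1 k.1 (c.2.1.trans k.2.1.symm)).trans k.2.2,
    (Y.fib _).symm.trans ((Y.act_d c.1 k.1 (c.2.1.trans k.2.1.symm)).trans k.2.2)⟩
  map_one' := Subtype.ext ((Y.act_one e k.1 k.2.1.symm).trans (congrArg Y.base.idm k.2.2))
  map_mul' a b := Subtype.ext
    (Y.act_mul a.1 b.1 k.1 (a.2.1.trans b.2.1.symm) (a.2.1.trans k.2.1.symm))

end CrossedModuleOver

section FreeLift

variable {𝒢 : AlgGroupoid V G} {C : Type*} (Y : CrossedModuleOver 𝒢 C) (ω : R → G)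
  (σ : R → C) (hσd : ∀ s, Y.base.d (σ s) = 𝒢.d (ω s))

def freeLift (e : V) : FreeGroup (Pairs 𝒢 ω e) →* LocalGroup Y.base e :=
  FreeGroup.lift fun p =>
    have hd : Y.base.d (Y.act (σ p.1.1) p.1.2) = e :=
      (Y.act_d _ _ ((hσd p.1.1).trans p.2.1)).trans p.2.2
    ⟨Y.act (σ p.1.1) p.1.2, hd, (Y.fib _).symm.trans hd⟩

lemma freeLift_of (e : V) (p : Pairs 𝒢 ω e) :
    (freeLift Y ω σ hσd e (.of p)).1 = Y.act (σ p.1.1) p.1.2 :=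
  congrArg Subtype.val (FreeGroup.lift_apply_of (β := LocalGroup Y.base e))

lemma deltaLocal_comp_freeLift (hω : ∀ s, 𝒢.d (ω s) = 𝒢.r (ω s))
    (hσδ : ∀ s, Y.δ (σ s) = ω s) (e : V) :
    (Y.deltaLocal e).comp (freeLift Y ω σ hσd e) = deltaHom 𝒢 ω hω e := by
  ext p
  refine Subtype.ext ?_
  rw [deltaHom_of]
  change Y.δ (freeLift Y ω σ hσd e (.of p)).1 = _
  rw [freeLift_of, Y.cm1 _ _ ((hσd p.1.1).trans p.2.1), hσδ]
  rfl

lemma freeLift_mapAlong (h : G) :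
    (freeLift Y ω σ hσd (𝒢.r h)).comp (mapAlong 𝒢 ω h) =
      (Y.actAlong h).comp (freeLift Y ω σ hσd (𝒢.d h)) := by
  ext p
  refine Subtype.ext ?_
  rw [MonoidHom.comp_apply, mapAlong_of, freeLift_of]
  change _ = Y.act (freeLift Y ω σ hσd (𝒢.d h) (.of p)).1 h
  rw [freeLift_of, ← Y.act_comp _ _ _ ((hσd p.1.1).trans p.2.1) p.2.2]
  rfl

lemma freeLift_conjAct (e : V) (k : LocalGroup 𝒢 e) :
    (freeLift Y ω σ hσd e).comp (conjAct 𝒢 ω e k) =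
      (Y.actLocal e k).comp (freeLift Y ω σ hσd e) := by
  ext p
  refine Subtype.ext ?_
  rw [MonoidHom.comp_apply, conjAct_of, freeLift_of]
  change _ = Y.act (freeLift Y ω σ hσd e (.of p)).1 k.1
  rw [freeLift_of, ← Y.act_comp _ _ _ ((hσd p.1.1).trans p.2.1) (p.2.2.trans k.2.1.symm)]
  rfl

lemma freeLift_conjAct_deltaHom (hω : ∀ s, 𝒢.d (ω s) = 𝒢.r (ω s))
    (hσδ : ∀ s, Y.δ (σ s) = ω s) (e : V) (u v : FreeGroup (Pairs 𝒢 ω e)) :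
    freeLift Y ω σ hσd e (conjAct 𝒢 ω e (deltaHom 𝒢 ω hω e u) v) =
      (freeLift Y ω σ hσd e u)⁻¹ * freeLift Y ω σ hσd e v * freeLift Y ω σ hσd e u := by
  rw [← deltaLocal_comp_freeLift Y ω σ hσd hω hσδ, ← MonoidHom.comp_apply, freeLift_conjAct]
  set a := freeLift Y ω σ hσd e u
  set c := freeLift Y ω σ hσd e v
  exact Subtype.ext (Y.cm2 c.1 a.1 (c.2.1.trans a.2.1.symm))

lemma freeLift_eq_one_of_mem_peifferSubgroup (hω : ∀ s, 𝒢.d (ω s) = 𝒢.r (ω s))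
    (hσδ : ∀ s, Y.δ (σ s) = ω s) (e : V) {x : FreeGroup (Pairs 𝒢 ω e)}
    (hx : x ∈ peifferSubgroup 𝒢 ω hω e) : freeLift Y ω σ hσd e x = 1 :=
  peifferClosure_le_ker _ (freeLift_conjAct_deltaHom Y ω σ hσd hω hσδ e) hx

lemma eq_freeLift {e : V} (Φ : FreeGroup (Pairs 𝒢 ω e) → C) (hd : ∀ x, Y.base.d (Φ x) = e)
    (hmul : ∀ x y, Φ (x * y) = Y.base.comp (Φ x) (Φ y))
    (hgen : ∀ p : Pairs 𝒢 ω e, Φ (.of p) = Y.act (σ p.1.1) p.1.2) (x : FreeGroup (Pairs 𝒢 ω e)) :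
    Φ x = (freeLift Y ω σ hσd e x).1 := by
  let Ψ : FreeGroup (Pairs 𝒢 ω e) →* LocalGroup Y.base e :=
    MonoidHom.mk' (fun x => ⟨Φ x, hd x, (Y.fib _).symm.trans (hd x)⟩)
      fun x y => Subtype.ext (hmul x y)
  have hΨ : Ψ = freeLift Y ω σ hσd e := by
    ext p
    exact Subtype.ext ((hgen p).trans (freeLift_of Y ω σ hσd e p).symm)
  exact congrArg Subtype.val (DFunLike.congr_fun hΨ x)

end FreeLift

/-- the Peiffer subgroup `P_e` is normal in `F_e`, invariant under the
`G`-action, and contained in the kernel of `δ`; `δ` and the action satisfy the crossed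
module identities modulo `P` (CM1 on the nose, CM2 modulo `P_e`); and the induced
crossed module `⊔_e F_e/P_e → G` is free on `ω`, expressed by the universal property:
for every crossed `G`-module `Y` and every `σ : R → C'` with `σ∂' = ω`, there is a
unique family of maps `Φ_e : F_e → C'` which kills `P_e` (hence factors through
`F_e/P_e`), is a morphism of crossed modules, and sends the generator `(s,g)` to
`(σ s)^g`. -/
theorem stmt14 {V G R : Type u} (𝒢 : AlgGroupoid V G) (ω : R → G)
    (hω : ∀ s, 𝒢.d (ω s) = 𝒢.r (ω s)) :
    -- P_e is normal
    (∀ e : V, (peifferSubgroup 𝒢 ω hω e).Normal) ∧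
    -- P is invariant under the G-action
    (∀ h : G, ∀ x ∈ peifferSubgroup 𝒢 ω hω (𝒢.d h),
      mapAlong 𝒢 ω h x ∈ peifferSubgroup 𝒢 ω hω (𝒢.r h)) ∧
    -- P_e is contained in the kernel of δ
    (∀ (e : V) (x : FreeGroup (Pairs 𝒢 ω e)),
      x ∈ peifferSubgroup 𝒢 ω hω e → deltaHom 𝒢 ω hω e x = 1) ∧
    -- CM1: δ is equivariant for the G-action
    (∀ (h : G) (x : FreeGroup (Pairs 𝒢 ω (𝒢.d h))),
      (deltaHom 𝒢 ω hω (𝒢.r h) (mapAlong 𝒢 ω h x)).1 =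
        𝒢.comp (𝒢.comp (𝒢.inv h) ((deltaHom 𝒢 ω hω (𝒢.d h) x).1)) h) ∧
    -- CM2 holds modulo P_e
    (∀ (e : V) (u v : FreeGroup (Pairs 𝒢 ω e)),
      conjAct 𝒢 ω e (deltaHom 𝒢 ω hω e u) v * (u⁻¹ * v * u)⁻¹ ∈
        peifferSubgroup 𝒢 ω hω e) ∧
    -- freeness of the induced crossed module ⊔_e F_e/P_e → G on ω
    (∀ (C' : Type u) (Y : CrossedModuleOver 𝒢 C') (σ : R → C'),
      (∀ s, Y.base.d (σ s) = 𝒢.d (ω s)) → (∀ s, Y.δ (σ s) = ω s) →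
      ∃! Φ : ∀ e : V, FreeGroup (Pairs 𝒢 ω e) → C',
        (∀ e x, Y.base.d (Φ e x) = e) ∧
        (∀ e x y, Φ e (x * y) = Y.base.comp (Φ e x) (Φ e y)) ∧
        (∀ e x, Φ e (x⁻¹) = Y.base.inv (Φ e x)) ∧
        (∀ e x, x ∈ peifferSubgroup 𝒢 ω hω e → Φ e x = Y.base.idm e) ∧
        (∀ e x, Y.δ (Φ e x) = (deltaHom 𝒢 ω hω e x).1) ∧
        (∀ (h : G) (x : FreeGroup (Pairs 𝒢 ω (𝒢.d h))),
          Φ (𝒢.r h) (mapAlong 𝒢 ω h x) = Y.act (Φ (𝒢.d h) x) h) ∧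
        (∀ (e : V) (p : Pairs 𝒢 ω e),
          Φ e (FreeGroup.of p) = Y.act (σ p.1.1) p.1.2)) := by
  refine ⟨fun e => peifferClosure_normal (conjAct_mul 𝒢 ω e),
    fun h x hx => peifferClosure_le_comap (mapAlong 𝒢 ω h) (conjHom 𝒢 h)
      (deltaHom_mapAlong 𝒢 ω hω h) (mapAlong_conjAct 𝒢 ω h) hx,
    fun e x hx => peifferClosure_le_ker _ (fun u => deltaHom_conjAct 𝒢 ω hω e (deltaHom 𝒢 ω hω e u)) hx,
    fun h x => congrArg Subtype.val (DFunLike.congr_fun (deltaHom_mapAlong 𝒢 ω hω h) x),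
    fun e => act_mul_inv_conj_mem_peifferClosure (conjAct_mul 𝒢 ω e),
    fun C' Y σ hσd hσδ => ?_⟩
  refine ⟨fun e x => (freeLift Y ω σ hσd e x).1,
    ⟨fun e x => (freeLift Y ω σ hσd e x).2.1,
      fun e x y => congrArg Subtype.val (map_mul (freeLift Y ω σ hσd e) x y),
      fun e x => congrArg Subtype.val (map_inv (freeLift Y ω σ hσd e) x),
      fun e x hx => congrArg Subtype.val
        (freeLift_eq_one_of_mem_peifferSubgroup Y ω σ hσd hω hσδ e hx),
      fun e x => congrArg Subtype.val
        (DFunLike.congr_fun (deltaLocal_comp_freeLift Y ω σ hσd hω hσδ e) x),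
      fun h x => congrArg Subtype.val (DFunLike.congr_fun (freeLift_mapAlong Y ω σ hσd h) x),
      freeLift_of Y ω σ hσd⟩,
    fun Φ ⟨hd, hmul, _, _, _, _, hgen⟩ => ?_⟩
  funext e x
  exact eq_freeLift Y ω σ hσd (Φ e) (hd e) (hmul e) (hgen e) x
end

section
/- Let M be an inverse monoid presented by [X : R], with presentation map θ : FIM(X) → M factored as FIM(X) →τ T →ψ M with τ idempotent pure and ψ idempotent separating, where T = FIM(X)/θ_min. Let Sq(P) be the Squier complex with vertex set T and let π(Sq(P), T) be its fundamental groupoid, with T-actions on edges t ▷ (p,l,r,q) = (tp,l,r,q) and (p,l,r,q) ◁ t = (p,l,r,qt). Then π(Sq(P), T) is a pseudoregular groupoid which is monoidal: the operations ∗ and ⊛ coincide. -/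
/-- The subgraph-generated arrows of a groupoid: those obtained from a set `Edg` of
edges and the identities by composition and inversion. -/
inductive GenBy {V : Type*} [Monoid V] {G : Type*} (S : SemiregularGroupoid V G)
    (Edg : Set G) : G → Prop
  | edge : ∀ γ ∈ Edg, GenBy S Edg γ
  | idm : ∀ v : V, GenBy S Edg (S.id v)
  | inv : ∀ γ : G, GenBy S Edg γ → GenBy S Edg (S.inv γ)
  | comp : ∀ γ δ : G, S.r γ = S.d δ → GenBy S Edg γ → GenBy S Edg δ →
      GenBy S Edg (S.comp γ δ)

/-!
On two edges `(p,l,r,q)`, `(p',l',r',q')` the composites `α ∗ β` and `α ⊛ β` are the two ways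
of applying both relations to `p l q p' l' q'`, so they agree by a 2-cell of the Squier complex.
Since the actions are functorial, the pairs on which `∗` and `⊛` agree are closed under
identities, inverses and composition in either variable, so agreement spreads from edges to the
whole groupoid they generate.
-/

namespace SemiregularGroupoid

variable {V : Type*} [Monoid V] {G : Type*} (S : SemiregularGroupoid V G)

lemma eq_inv_of_comp_eq_id {α β : G} (hαβ : S.r α = S.d β)
    (h : S.comp α β = S.id (S.d α)) : β = S.inv α := by
  have h' : S.comp (S.inv α) (S.comp α β) = S.comp (S.inv α) (S.id (S.d α)) := by rw [h]
  rwa [← S.comp_assoc _ _ _ (S.r_inv α) hαβ, S.inv_comp, hαβ, S.id_comp,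
    ← S.r_inv α, S.comp_id] at h'

lemma actR_inv (α : G) (x : V) : S.actR (S.inv α) x = S.inv (S.actR α x) := by
  apply S.eq_inv_of_comp_eq_id
  · rw [S.r_actR, S.d_actR, S.d_inv]
  · rw [← S.actR_comp α (S.inv α) x (S.d_inv α).symm, S.comp_inv, S.actR_id, S.d_actR]

lemma actL_inv (x : V) (α : G) : S.actL x (S.inv α) = S.inv (S.actL x α) := by
  apply S.eq_inv_of_comp_eq_id
  · rw [S.r_actL, S.d_actL, S.d_inv]
  · rw [← S.actL_comp x α (S.inv α) (S.d_inv α).symm, S.comp_inv, S.actL_id, S.d_actL]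

lemma inv_comp_eq_comp_inv_of_comp_eq {α β γ δ : G} (hαγ : S.r α = S.d γ)
    (hβδ : S.r β = S.d δ) (hd : S.d α = S.d β) (h : S.comp α γ = S.comp β δ) :
    S.comp (S.inv α) β = S.comp γ (S.inv δ) := by
  have hγ : γ = S.comp (S.inv α) (S.comp β δ) := by
    rw [← h, ← S.comp_assoc _ _ _ (S.r_inv α) hαγ, S.inv_comp, hαγ, S.id_comp]
  have hβ : S.comp (S.comp β δ) (S.inv δ) = β := by
    rw [S.comp_assoc _ _ _ hβδ (S.d_inv δ).symm, S.comp_inv, ← hβδ, S.comp_id]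
  calc S.comp (S.inv α) β
      = S.comp (S.inv α) (S.comp (S.comp β δ) (S.inv δ)) := by rw [hβ]
    _ = S.comp (S.comp (S.inv α) (S.comp β δ)) (S.inv δ) := by
        rw [S.comp_assoc (S.inv α) (S.comp β δ) (S.inv δ)
          (by rw [S.r_inv, S.d_comp _ _ hβδ, hd])
          (by rw [S.r_comp _ _ hβδ, S.d_inv])]
    _ = S.comp γ (S.inv δ) := by rw [← hγ]

lemma star_id_left (v : V) (β : G) : S.star (S.id v) β = S.actL v β := by
  rw [star, S.actR_id, S.r_id, ← S.d_actL, S.id_comp]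

lemma ostar_id_left (v : V) (β : G) : S.ostar (S.id v) β = S.actL v β := by
  rw [ostar, S.d_id, S.actR_id, ← S.r_actL, S.comp_id]

lemma star_id_right (α : G) (v : V) : S.star α (S.id v) = S.actR α v := by
  rw [star, S.d_id, S.actL_id, ← S.r_actR, S.comp_id]

lemma ostar_id_right (α : G) (v : V) : S.ostar α (S.id v) = S.actR α v := by
  rw [ostar, S.r_id, S.actL_id, ← S.d_actR, S.id_comp]

lemma star_inv_left {α β : G} (h : S.star α β = S.ostar α β) :
    S.star (S.inv α) β = S.ostar (S.inv α) β := by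
  rw [star, ostar] at h ⊢
  rw [S.actR_inv, S.r_inv, S.d_inv, S.actR_inv]
  exact S.inv_comp_eq_comp_inv_of_comp_eq (by rw [S.r_actR, S.d_actL])
    (by rw [S.r_actL, S.d_actR]) (by rw [S.d_actR, S.d_actL]) h

lemma star_inv_right {α β : G} (h : S.star α β = S.ostar α β) :
    S.star α (S.inv β) = S.ostar α (S.inv β) := by
  rw [star, ostar] at h ⊢
  rw [S.d_inv, S.actL_inv, S.r_inv, S.actL_inv]
  exact (S.inv_comp_eq_comp_inv_of_comp_eq (by rw [S.r_actL, S.d_actR])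
    (by rw [S.r_actR, S.d_actL]) (by rw [S.d_actL, S.d_actR]) h.symm).symm

lemma star_comp_left {α α' β : G} (hαα' : S.r α = S.d α')
    (h : S.star α β = S.ostar α β) (h' : S.star α' β = S.ostar α' β) :
    S.star (S.comp α α') β = S.ostar (S.comp α α') β := by
  rw [star, ostar] at h h' ⊢
  calc S.comp (S.actR (S.comp α α') (S.d β)) (S.actL (S.r (S.comp α α')) β)
      = S.comp (S.actR α (S.d β)) (S.comp (S.actR α' (S.d β)) (S.actL (S.r α') β)) := by
        rw [S.actR_comp _ _ _ hαα', S.r_comp _ _ hαα', S.comp_assoc _ _ _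
          (by rw [S.r_actR, S.d_actR, hαα']) (by rw [S.r_actR, S.d_actL])]
    _ = S.comp (S.comp (S.actR α (S.d β)) (S.actL (S.r α) β)) (S.actR α' (S.r β)) := by
        rw [h', ← hαα', ← S.comp_assoc _ _ _ (by rw [S.r_actR, S.d_actL])
          (by rw [S.r_actL, S.d_actR, hαα'])]
    _ = S.comp (S.actL (S.d (S.comp α α')) β) (S.actR (S.comp α α') (S.r β)) := by
        rw [h, S.comp_assoc _ _ _ (by rw [S.r_actL, S.d_actR])
          (by rw [S.r_actR, S.d_actR, hαα']), ← S.actR_comp _ _ _ hαα', S.d_comp _ _ hαα']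

lemma star_comp_right {α β β' : G} (hββ' : S.r β = S.d β')
    (h : S.star α β = S.ostar α β) (h' : S.star α β' = S.ostar α β') :
    S.star α (S.comp β β') = S.ostar α (S.comp β β') := by
  rw [star, ostar] at h h' ⊢
  calc S.comp (S.actR α (S.d (S.comp β β'))) (S.actL (S.r α) (S.comp β β'))
      = S.comp (S.comp (S.actR α (S.d β)) (S.actL (S.r α) β)) (S.actL (S.r α) β') := by
        rw [S.d_comp _ _ hββ', S.actL_comp _ _ _ hββ', S.comp_assoc _ _ _
          (by rw [S.r_actR, S.d_actL]) (by rw [S.r_actL, S.d_actL, hββ'])]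
    _ = S.comp (S.actL (S.d α) β) (S.comp (S.actR α (S.d β')) (S.actL (S.r α) β')) := by
        rw [h, S.comp_assoc _ _ _ (by rw [S.r_actL, S.d_actR])
          (by rw [S.r_actR, S.d_actL, hββ']), hββ']
    _ = S.comp (S.actL (S.d α) (S.comp β β')) (S.actR α (S.r (S.comp β β'))) := by
        rw [h', ← S.comp_assoc _ _ _ (by rw [S.r_actL, S.d_actL, hββ'])
          (by rw [S.r_actL, S.d_actR]), ← S.actL_comp _ _ _ hββ', S.r_comp _ _ hββ']

lemma star_eq_ostar_of_genBy_right {E : Set G} {α β : G}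
    (hα : ∀ δ ∈ E, S.star α δ = S.ostar α δ) (hβ : GenBy S E β) :
    S.star α β = S.ostar α β := by
  induction hβ with
  | edge δ hδ => exact hα δ hδ
  | idm v => rw [star_id_right, ostar_id_right]
  | inv δ _ ih => exact S.star_inv_right ih
  | comp δ δ' hδδ' _ _ ih ih' => exact S.star_comp_right hδδ' ih ih'

lemma star_eq_ostar_of_genBy {E : Set G}
    (hE : ∀ γ ∈ E, ∀ δ ∈ E, S.star γ δ = S.ostar γ δ) {α β : G}
    (hα : GenBy S E α) (hβ : GenBy S E β) : S.star α β = S.ostar α β := by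
  induction hα with
  | edge γ hγ => exact S.star_eq_ostar_of_genBy_right (hE γ hγ) hβ
  | idm v => rw [star_id_left, ostar_id_left]
  | inv γ _ ih => exact S.star_inv_left ih
  | comp γ γ' hγγ' _ _ ih ih' => exact S.star_comp_left hγγ' ih ih'

end SemiregularGroupoid

/-- the fundamental groupoid of the Squier complex of an inverse monoid
presentation is a monoidal pseudoregular groupoid.  Here `T` is the inverse monoid
`T(M,X) = FIM(X)/θ_min`, `Rel` is the set of relations with sides `lm, rm : Rel → T`
(the images of `l`, `r` under `ρτ`), and `Γ` is the fundamental groupoid `π(Sq(P),T)`,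
a semiregular groupoid over `T` whose arrows are generated by the (homotopy classes of)
edges `(p, l, r, q)` with `d = p(lρτ)q`, `r = p(rρτ)q`, on which the `T`-actions act by
`t ▷ (p,l,r,q) = (tp,l,r,q)`, `(p,l,r,q) ◁ t = (p,l,r,qt)`, and in which the 2-cells of
the Squier complex give the homotopy relation for non-overlapping applications of
relations.  Conclusion: the operations `∗` and `⊛` coincide, i.e. `Γ` is monoidal
(and pseudoregular, its vertex set being the inverse monoid `T`). -/
theorem stmt15 {T : Type*} [InverseMonoid T] {Γ Rel : Type*}
    (S : SemiregularGroupoid T Γ)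
    (edge : T → Rel → T → Γ) (lm rm : Rel → T)
    (hd : ∀ p s q, S.d (edge p s q) = p * lm s * q)
    (hr : ∀ p s q, S.r (edge p s q) = p * rm s * q)
    (hactL : ∀ t p s q, S.actL t (edge p s q) = edge (t * p) s q)
    (hactR : ∀ p s q t, S.actR (edge p s q) t = edge p s (q * t))
    (h2cell : ∀ p s q p' s' q',
      S.comp (edge p s (q * p' * lm s' * q')) (edge (p * rm s * q * p') s' q') =
      S.comp (edge (p * lm s * q * p') s' q') (edge p s (q * p' * rm s' * q')))
    (hgen : ∀ γ : Γ, GenBy S {γ | ∃ p s q, γ = edge p s q} γ) :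
    ∀ α β : Γ, S.star α β = S.ostar α β := by
  intro α β
  refine S.star_eq_ostar_of_genBy ?_ (hgen α) (hgen β)
  rintro _ ⟨p, s, q, rfl⟩ _ ⟨p', s', q', rfl⟩
  simp only [SemiregularGroupoid.star, SemiregularGroupoid.ostar, hd, hr, hactL, hactR,
    ← mul_assoc]
  exact h2cell p s q p' s' q'
end

section
/- Let [X:R] be an inverse monoid presentation of M with factorization FIM(X) →τ T →ψ M (τ idempotent pure, ψ idempotent separating). For each idempotent e of M, the group K_e = {a ∈ T : aψ = e, aa⁻¹ = ẽ} (a component of the kernel of ψ) is a free group, since the maximum group image map σ : T → F(X) restricts to an injective homomorphism on K_e. -/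
/-!
`K_e` is a group under the multiplication of `T`, so its only idempotent is its identity.
Since `σ` is idempotent pure, everything in `K_e` that `σ` sends to `1` is idempotent, so
`σ` restricts to an injective homomorphism `K_e → F(X)`. Thus `K_e` is isomorphic to a subgroup
of a free group, which is free by Nielsen–Schreier.
-/

theorem IsFreeGroup.of_injective {G H : Type*} [Group G] [Group H] [IsFreeGroup H]
    {f : G →* H} (hf : Function.Injective f) : IsFreeGroup G :=
  IsFreeGroup.ofMulEquiv (MonoidHom.ofInjective hf).symm

section GroupSubset

variable {T : Type*} [Mul T] {S : Set T} [Group S]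

theorem eq_one_of_coe_mul_self_eq (hmul : ∀ a b : S, ((a * b : S) : T) = a * b) {a : S}
    (ha : (a : T) * a = a) : a = 1 :=
  mul_eq_left.mp (Subtype.ext (by rw [hmul, ha]))

def restrictToGroupSubset {G : Type*} [Group G] (σ : T → G)
    (hσ : ∀ a b : T, σ (a * b) = σ a * σ b) (hmul : ∀ a b : S, ((a * b : S) : T) = a * b) :
    S →* G :=
  MonoidHom.mk' (fun a => σ a) fun a b => by rw [hmul, hσ]

theorem restrictToGroupSubset_injective {G : Type*} [Group G] (σ : T → G)
    (hσ : ∀ a b : T, σ (a * b) = σ a * σ b) (hσpure : ∀ a : T, σ a = 1 → a * a = a)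
    (hmul : ∀ a b : S, ((a * b : S) : T) = a * b) :
    Function.Injective (restrictToGroupSubset σ hσ hmul) :=
  (injective_iff_map_eq_one _).mpr fun a ha => eq_one_of_coe_mul_self_eq hmul (hσpure a ha)

end GroupSubset

theorem stmt18_general {T X : Type*} [InverseMonoid T]
    (σ : T → FreeGroup X) (hσmul : ∀ a b : T, σ (a * b) = σ a * σ b)
    (hσpure : ∀ a : T, σ a = 1 → a * a = a)
    (Ke : Set T)
    [grp : Group ↥Ke]
    (hmulc : ∀ a b : ↥Ke, ((a * b : ↥Ke) : T) = (a : T) * (b : T)) :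
    IsFreeGroup ↥Ke :=
  IsFreeGroup.of_injective (restrictToGroupSubset_injective σ hσmul hσpure hmulc)

/-- in the factorization `FIM(X) →τ T →ψ M`, each component `K_e` of the
kernel of the idempotent separating map `ψ` is a free group.  Here `T` is arboreal,
hence `E`-unitary with maximum group image the free group `F(X)` and idempotent pure
quotient map `σ : T → FreeGroup X`; `ẽ` is the unique idempotent of `T` over
`e ∈ E(M)`, and `K_e = {a ∈ T : aψ = e, aa⁻¹ = ẽ}` carries its group structure (from
the Clifford kernel of `ψ`), compatible with the operations of `T`. -/
theorem stmt18 {T M X : Type*} [InverseMonoid T] [InverseMonoid M]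
    (ψ : T → M) (hψmul : ∀ a b : T, ψ (a * b) = ψ a * ψ b)
    (hψsep : ∀ e f : T, e * e = e → f * f = f → ψ e = ψ f → e = f)
    (σ : T → FreeGroup X) (hσmul : ∀ a b : T, σ (a * b) = σ a * σ b)
    (hσpure : ∀ a : T, σ a = 1 → a * a = a)
    (e : M) (he : e * e = e)
    (etil : T) (hetil : etil * etil = etil) (hψetil : ψ etil = e)
    (Ke : Set T) (hKe : Ke = {a : T | ψ a = e ∧ a * a⁻¹ = etil})
    [grp : Group ↥Ke]
    (hmulc : ∀ a b : ↥Ke, ((a * b : ↥Ke) : T) = (a : T) * (b : T))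
    (hinvc : ∀ a : ↥Ke, ((a⁻¹ : ↥Ke) : T) = (a : T)⁻¹)
    (honec : ((1 : ↥Ke) : T) = etil) :
    IsFreeGroup ↥Ke :=
  stmt18_general σ hσmul hσpure Ke (grp := grp) hmulc
end

section
/- Let M be an inverse monoid generated by X with presentation map θ, and let Sch^L(M,X) be the left Schützenberger graph: vertices M, and an x-labelled edge from s to (xθ)s whenever (x⁻¹x)θ ≥ ss⁻¹. Define M-actions on the cellular chain groups C₀ and C₁ by s ◁ t = st and (x,s) ◁ t = (x,st). Then the boundary map ∂ : C₁(Sch^L(M,X)) → C₀(Sch^L(M,X)), (x,s) ↦ (xθ)s − s, is a morphism of M-modules, and its kernel H₁(Sch^L(M,X)) = ⊔_{e∈E(M)} H₁(Sch^L(M,X,e)) is an M-module. -/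
/-- The edge set of the left Schützenberger graph `Sch^L(M,X)`: pairs `(x, s)` with
`(x⁻¹x)θ ≥ ss⁻¹` in the natural order (for idempotents, `e ≥ f` iff `f * e = f`),
where `gen x = xθ`. -/
def SchEdges {M X : Type*} [InverseMonoid M] (gen : X → M) : Type _ :=
  {p : X × M // (p.2 * p.2⁻¹) * ((gen p.1)⁻¹ * gen p.1) = p.2 * p.2⁻¹}

/-- The boundary map `∂ : C₁ → C₀`, `(x,s) ↦ (xθ)s − s`, on cellular chains. -/
noncomputable def schBoundary {M X : Type*} [InverseMonoid M] (gen : X → M) :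
    (SchEdges gen →₀ ℤ) →ₗ[ℤ] (M →₀ ℤ) :=
  Finsupp.lift (M →₀ ℤ) ℤ (SchEdges gen)
    (fun p => Finsupp.single (gen p.1.1 * p.1.2) 1 - Finsupp.single p.1.2 1)

/-- The `M`-action on `C₀`, induced by `s ◁ t = st`. -/
noncomputable def actC0 {M X : Type*} [InverseMonoid M] (gen : X → M) (t : M) :
    (M →₀ ℤ) →ₗ[ℤ] (M →₀ ℤ) :=
  Finsupp.lmapDomain ℤ ℤ (fun s : M => s * t)

/-- The `M`-action on `C₁`, induced by an action `(x,s) ◁ t = (x, st)` on edges. -/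
noncomputable def actC1 {M X : Type*} [InverseMonoid M] (gen : X → M)
    (actE : M → SchEdges gen → SchEdges gen) (t : M) :
    (SchEdges gen →₀ ℤ) →ₗ[ℤ] (SchEdges gen →₀ ℤ) :=
  Finsupp.lmapDomain ℤ ℤ (actE t)

section Semigroup
variable {S : Type*} [Semigroup S] {a b : S}

lemma isIdempotentElem_mul_of_mul_mul_eq (h : a * b * a = a) : IsIdempotentElem (a * b) := by
  rw [IsIdempotentElem, ← mul_assoc, h]

lemma isIdempotentElem_mul_of_mul_mul_eq' (h : a * b * a = a) : IsIdempotentElem (b * a) := by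
  rw [IsIdempotentElem, mul_assoc, ← mul_assoc a, h]

end Semigroup

namespace InverseMonoid
variable {M : Type*} [InverseMonoid M]

lemma commute_of_isIdempotentElem {e f : M} (he : IsIdempotentElem e)
    (hf : IsIdempotentElem f) : Commute e f :=
  idem_comm e f he hf

lemma inv_unique {a b c : M} (hb₁ : a * b * a = a) (hb₂ : b * a * b = b)
    (hc₁ : a * c * a = a) (hc₂ : c * a * c = c) : b = c := by
  have hb_eq : b = c * a * b :=
    calc b = b * (a * c * a) * b := by rw [hc₁, hb₂]
      _ = (b * a) * (c * a) * b := by simp only [mul_assoc]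
      _ = (c * a) * (b * a) * b := by
        rw [(commute_of_isIdempotentElem (isIdempotentElem_mul_of_mul_mul_eq' hb₁)
          (isIdempotentElem_mul_of_mul_mul_eq' hc₁)).eq]
      _ = c * a * (b * a * b) := by simp only [mul_assoc]
      _ = c * a * b := by rw [hb₂]
  have hc_eq : c = c * a * b :=
    calc c = c * (a * b * a) * c := by rw [hb₁, hc₂]
      _ = c * ((a * b) * (a * c)) := by simp only [mul_assoc]
      _ = c * ((a * c) * (a * b)) := by
        rw [(commute_of_isIdempotentElem (isIdempotentElem_mul_of_mul_mul_eq hb₁)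
          (isIdempotentElem_mul_of_mul_mul_eq hc₁)).eq]
      _ = (c * a * c) * (a * b) := by simp only [mul_assoc]
      _ = c * a * b := by rw [hc₂, mul_assoc]
  rw [hb_eq, ← hc_eq]

lemma mul_inv_rev (s t : M) : (s * t)⁻¹ = t⁻¹ * s⁻¹ := by
  have hcomm : Commute (s⁻¹ * s) (t * t⁻¹) :=
    commute_of_isIdempotentElem (isIdempotentElem_mul_of_mul_mul_eq' (mul_inv_mul s))
      (isIdempotentElem_mul_of_mul_mul_eq (mul_inv_mul t))
  refine inv_unique (a := s * t) (mul_inv_mul _) (inv_mul_inv _) ?_ ?_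
  · calc s * t * (t⁻¹ * s⁻¹) * (s * t) = s * ((t * t⁻¹) * (s⁻¹ * s)) * t := by
          simp only [mul_assoc]
      _ = (s * s⁻¹ * s) * (t * t⁻¹ * t) := by rw [← hcomm.eq]; simp only [mul_assoc]
      _ = s * t := by rw [mul_inv_mul, mul_inv_mul]
  · calc t⁻¹ * s⁻¹ * (s * t) * (t⁻¹ * s⁻¹) = t⁻¹ * ((s⁻¹ * s) * (t * t⁻¹)) * s⁻¹ := by
          simp only [mul_assoc]
      _ = (t⁻¹ * t * t⁻¹) * (s⁻¹ * s * s⁻¹) := by rw [hcomm.eq]; simp only [mul_assoc]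
      _ = t⁻¹ * s⁻¹ := by rw [inv_mul_inv, inv_mul_inv]

lemma mul_inv_mul_mul_eq (s t : M) : (s * t)⁻¹ * (s * t) = t⁻¹ * (s⁻¹ * s) * t := by
  simp only [mul_inv_rev, mul_assoc]

end InverseMonoid

section Schutzenberger
variable {M X : Type*} [InverseMonoid M] {gen : X → M}

lemma schBoundary_single (p : SchEdges gen) (n : ℤ) :
    schBoundary gen (Finsupp.single p n) =
      n • (Finsupp.single (gen p.1.1 * p.1.2) 1 - Finsupp.single p.1.2 1) :=
  (Finsupp.lift_apply _ _ _ _ _).trans (Finsupp.sum_single_index (zero_smul _ _))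

lemma schBoundary_comp_actC1 {actE : M → SchEdges gen → SchEdges gen}
    (hactE : ∀ (t : M) (p : SchEdges gen), (actE t p).1 = (p.1.1, p.1.2 * t)) (t : M) :
    (schBoundary gen).comp (actC1 gen actE t) = (actC0 gen t).comp (schBoundary gen) := by
  refine Finsupp.lhom_ext fun p n => ?_
  simp [actC1, actC0, schBoundary_single, hactE, Finsupp.mapDomain_sub, mul_assoc]

end Schutzenberger

/-- the boundary map `∂ : C₁(Sch^L(M,X)) → C₀(Sch^L(M,X))`,
`(x,s) ↦ (xθ)s − s`, is a morphism of `M`-modules for the actions `s ◁ t = st` and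
`(x,s) ◁ t = (x,st)`, and its kernel `H₁(Sch^L(M,X)) = ⊔_e H₁(Sch^L(M,X,e))` is an
`M`-module (it is invariant under the `M`-action; the components are indexed by the
idempotents via `s ↦ s⁻¹s`, and the action carries the component at `e` to the
component at `t⁻¹et`). -/
theorem stmt19 {M X : Type*} [InverseMonoid M] (gen : X → M)
    (actE : M → SchEdges gen → SchEdges gen)
    (hactE : ∀ (t : M) (p : SchEdges gen), (actE t p).1 = (p.1.1, p.1.2 * t)) :
    -- ∂ is a morphism of M-modules
    (∀ t : M, (schBoundary gen).comp (actC1 gen actE t) =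
      (actC0 gen t).comp (schBoundary gen)) ∧
    -- the kernel H₁ is closed under the M-action, hence an M-module
    (∀ (t : M) (c : SchEdges gen →₀ ℤ), schBoundary gen c = 0 →
      schBoundary gen (actC1 gen actE t c) = 0) ∧
    -- the grading over E(M) is respected: the action by t carries the component
    -- at e = s⁻¹s to the component at t⁻¹et
    (∀ s t : M, (s * t)⁻¹ * (s * t) = t⁻¹ * (s⁻¹ * s) * t) := by
  refine ⟨schBoundary_comp_actC1 hactE, fun t c hc => ?_, InverseMonoid.mul_inv_mul_mul_eq⟩
  rw [← LinearMap.comp_apply, schBoundary_comp_actC1 hactE, LinearMap.comp_apply, hc, map_zero]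
end
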